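/- arXiv:0704.2161 — 6 statements merged into one kernel-verified Lean document; each statement's English description precedes it below -/
import Mathlib

section
/- Let R be a commutative self FP-injective ring. If R is coherent, then R is semicoherent. -/
/-!
`Hom_R(E, F)` is a submodule of the product `E → F`, which is injective, so it suffices to show
that injective modules are flat. By the equational criterion this comes down to embedding
`R^l / R f` into a finite free module and extending along that embedding.

Let `K ≤ R^n` be generated by `v_1, …, v_m`. Its annihilator `K^⊥` in the dual module is the
kernel of `A : (R^n)^* → R^m`, `φ ↦ (φ v_j)_j`, so it is finitely generated by coherence. If `x`
is killed by `K^⊥`, evaluation at `x` factors through the finitely generated image of `A`, and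
self FP-injectivity extends it to some `ψ : R^m → R`; then `x = ∑ ψ(e_j) v_j ∈ K`. Hence
`K^⊥⊥ = K`, and evaluation at finitely many generators of `K^⊥` embeds `R^n / K` into `R^k`.
-/

universe u

open CategoryTheory

/-- A commutative ring is *coherent* if every finitely generated ideal is finitely presented. -/
def IsCoherentRing (R : Type u) [CommRing R] : Prop :=
  ∀ I : Ideal R, I.FG → Module.FinitePresentation R I

/-- A commutative ring is *semicoherent* if for every pair of injective modules `E, F`,
the module `Hom_R(E, F)` is isomorphic to a submodule of a flat module. -/
def IsSemicoherentRing (R : Type u) [CommRing R] : Prop :=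
  ∀ E F : ModuleCat.{u} R, Module.Injective R E → Module.Injective R F →
    ∃ (M : ModuleCat.{u} R) (f : (E →ₗ[R] F) →ₗ[R] M),
      Module.Flat R M ∧ Function.Injective f

/-- A module `M` is *FP-injective* if `Ext¹_R(F, M) = 0` for every finitely presented
module `F`. -/
def IsFPInjective (R : Type u) [CommRing R] (M : Type u) [AddCommGroup M] [Module R M] : Prop :=
  ∀ F : ModuleCat.{u} R, Module.FinitePresentation R F →
    Subsingleton (((Ext R (ModuleCat.{u} R) 1).obj (Opposite.op F)).obj (ModuleCat.of R M))

/-- A commutative ring is an *IF-ring* if every injective module over it is flat. -/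
def IsIFRing (R : Type u) [CommRing R] : Prop :=
  ∀ M : ModuleCat.{u} R, Module.Injective R M → Module.Flat R M

/-- `f : M →ₗ[R] E` exhibits `E` as an injective hull (injective envelope) of `M`:
`E` is injective and `f` is an essential monomorphism. -/
def IsInjectiveHull (R : Type u) [CommRing R] (M : Type u) [AddCommGroup M] [Module R M]
    (E : Type u) [AddCommGroup E] [Module R E] (f : M →ₗ[R] E) : Prop :=
  Module.Injective R E ∧ Function.Injective f ∧
    ∀ N : Submodule R E, N ≠ ⊥ → N ⊓ LinearMap.range f ≠ ⊥

/-- A submodule is indecomposable if it is nonzero and is not the direct sum of two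
nonzero submodules. -/
def IsIndecomposableSubmodule {R : Type u} [CommRing R] {M : Type u} [AddCommGroup M]
    [Module R M] (N : Submodule R M) : Prop :=
  N ≠ ⊥ ∧ ∀ A B : Submodule R M, A ≤ N → B ≤ N → A ⊓ B = ⊥ → A ⊔ B = N → A = ⊥ ∨ B = ⊥

/-- A module has *finite Goldie dimension* if its injective hull is a finite direct sum
of indecomposable injective modules. -/
def HasFiniteGoldieDimension (R : Type u) [CommRing R] (M : Type u) [AddCommGroup M]
    [Module R M] : Prop :=
  ∃ (E : ModuleCat.{u} R) (f : M →ₗ[R] E) (n : ℕ) (N : Fin n → Submodule R E),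
    IsInjectiveHull R M E f ∧ iSupIndep N ∧ (⨆ i, N i) = ⊤ ∧
      ∀ i, IsIndecomposableSubmodule (N i) ∧ Module.Injective R (N i)

/-- A commutative ring is *arithmetical* if all its localizations at maximal ideals are
valuation rings, i.e. have totally ordered lattices of ideals. -/
def IsArithmeticalRing (R : Type u) [CommRing R] : Prop :=
  ∀ (P : Ideal R) [P.IsMaximal],
    ∀ I J : Ideal (Localization.AtPrime P), I ≤ J ∨ J ≤ I

/-- A module `M` is *finitely injective* if every homomorphism from a finitely generated
submodule `A` of an arbitrary module `B` into `M` extends to `B`. -/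
def IsFinitelyInjective (R : Type u) [CommRing R] (M : Type u) [AddCommGroup M]
    [Module R M] : Prop :=
  ∀ (B : ModuleCat.{u} R) (A : Submodule R B), A.FG →
    ∀ f : A →ₗ[R] M, ∃ g : (B : Type u) →ₗ[R] M, ∀ a : A, g a = f a

open CategoryTheory Limits Module

namespace CategoryTheory.ProjectiveResolution

variable {R : Type*} [Ring R] {C : Type*} [Category C] [Abelian C] [Linear R C]
  [EnoughProjectives C]

lemma exists_d_comp_eq_of_subsingleton_ext_one {X Y : C} (P : ProjectiveResolution X)
    (hY : Subsingleton (((Ext R C 1).obj (Opposite.op X)).obj Y))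
    (g : P.complex.X 1 ⟶ Y) (hg : P.complex.d 2 1 ≫ g = 0) :
    ∃ f : P.complex.X 0 ⟶ Y, P.complex.d 1 0 ≫ f = g := by
  have hzero : IsZero ((P.complex.linearYonedaObj R Y).homology 1) :=
    ModuleCat.isZero_of_subsingleton _ |>.of_iso (P.isoExt 1 Y).symm
  have := (P.complex.linearYonedaObj R Y).exactAt_iff_isZero_homology 1 |>.mpr hzero
  rw [HomologicalComplex.exactAt_iff' _ 0 1 2 (by simp) (by simp),
    ShortComplex.moduleCat_exact_iff] at this
  exact this g hg

end CategoryTheory.ProjectiveResolution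

theorem Submodule.exists_comp_subtype_eq_of_subsingleton_ext_one {R : Type u} [CommRing R]
    {P : Type u} [AddCommGroup P] [Module R P] [Module.Projective R P] (K : Submodule R P)
    {Y : ModuleCat.{u} R}
    (hY : Subsingleton
      (((Ext R (ModuleCat.{u} R) 1).obj (Opposite.op (ModuleCat.of R (P ⧸ K)))).obj Y))
    (φ : K →ₗ[R] Y) : ∃ ψ : P →ₗ[R] Y, ψ ∘ₗ K.subtype = φ := by
  -- `α` and `β` compare `P` with a resolution `Q` of `P ⧸ K`. The 1-cocycle `φ ∘ β ∘ d` is a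
  -- coboundary `f ∘ d`, and `f ∘ α + φ ∘ (1 - β ∘ α)` extends `φ`.
  let Q := ProjectiveResolution.of (ModuleCat.of R (P ⧸ K))
  let s : Q.complex.X 0 →ₗ[R] P ⧸ K := (Q.π.f 0).hom
  let d := (Q.complex.d 1 0).hom
  have hs : Function.Surjective s := (ModuleCat.epi_iff_surjective _).mp inferInstance
  have hds (x) : s (d x) = 0 := congr($(Q.complex_d_comp_π_f_zero).hom x)
  obtain ⟨α, hα⟩ := Module.projective_lifting_property s K.mkQ hs
  obtain ⟨β, hβ⟩ := Module.projective_lifting_property K.mkQ s K.mkQ_surjective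
  have hβK (q) (hq : s q = 0) : β q ∈ K := by
    rw [← Submodule.Quotient.mk_eq_zero, ← K.mkQ_apply, ← LinearMap.comp_apply, hβ, hq]
  let g : Q.complex.X 1 ⟶ Y :=
    ModuleCat.ofHom (φ ∘ₗ (β ∘ₗ d).codRestrict K fun x => hβK _ (hds x))
  have hg : Q.complex.d 2 1 ≫ g = 0 := by
    ext x
    have hdd : d ((Q.complex.d 2 1).hom x) = 0 := congr($(Q.complex.d_comp_d 2 1 0).hom x)
    have : (β ∘ₗ d).codRestrict K (fun x => hβK _ (hds x)) ((Q.complex.d 2 1).hom x) = 0 :=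
      Subtype.ext (by simp [hdd])
    simp [g, this]
  obtain ⟨f, hf⟩ := Q.exists_d_comp_eq_of_subsingleton_ext_one hY g hg
  have hfβ (q) (hq : s q = 0) : f q = φ ⟨β q, hβK q hq⟩ := by
    obtain ⟨x, rfl⟩ := (ShortComplex.moduleCat_exact_iff _).mp Q.exact₀ q hq
    exact congr($(hf).hom x)
  have hαβ (p : P) : p - β (α p) ∈ K := by
    rw [← Submodule.Quotient.mk_eq_zero, ← K.mkQ_apply, map_sub, ← LinearMap.comp_apply K.mkQ,
      hβ, ← LinearMap.comp_apply s, hα, sub_self]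
  refine ⟨f.hom ∘ₗ α + φ ∘ₗ (LinearMap.id - β ∘ₗ α).codRestrict K hαβ, ?_⟩
  ext ⟨p, hp⟩
  have hsα : s (α p) = 0 := by
    rw [← LinearMap.comp_apply, hα, K.mkQ_apply, Submodule.Quotient.mk_eq_zero]; exact hp
  simp only [LinearMap.comp_apply, LinearMap.add_apply, Submodule.subtype_apply]
  rw [hfβ _ hsα, ← map_add]
  congr 1
  ext
  simp

section
variable {R : Type u} [CommRing R] {M : Type u} [AddCommGroup M] [Module R M]
  {P : Type u} [AddCommGroup P] [Module R P] [Module.Projective R P] [Module.Finite R P]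

theorem IsFPInjective.exists_comp_subtype_eq (hM : IsFPInjective R M) {K : Submodule R P}
    (hK : K.FG) (φ : K →ₗ[R] M) : ∃ ψ : P →ₗ[R] M, ψ ∘ₗ K.subtype = φ :=
  have : Module.FinitePresentation R P := Module.finitePresentation_of_projective R P
  K.exists_comp_subtype_eq_of_subsingleton_ext_one
    (hM _ (Module.finitePresentation_of_surjective K.mkQ K.mkQ_surjective (by rwa [K.ker_mkQ])))
    φ

theorem IsFPInjective.exists_comp_eq_of_ker_le (hM : IsFPInjective R M) {N : Type u}
    [AddCommGroup N] [Module R N] [Module.Finite R N] (f : N →ₗ[R] P) (g : N →ₗ[R] M)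
    (h : LinearMap.ker f ≤ LinearMap.ker g) : ∃ ψ : P →ₗ[R] M, ψ ∘ₗ f = g := by
  obtain ⟨ψ, hψ⟩ := hM.exists_comp_subtype_eq (Submodule.fg_range f)
    ((LinearMap.ker f).liftQ g h ∘ₗ f.quotKerEquivRange.symm.toLinearMap)
  refine ⟨ψ, LinearMap.ext fun x => ?_⟩
  simpa using LinearMap.congr_fun hψ ⟨f x, LinearMap.mem_range_self f x⟩

end

def IsCoherentModule (R : Type*) [Ring R] (M : Type*) [AddCommGroup M] [Module R M] : Prop :=
  ∀ N : Submodule R M, N.FG → Module.FinitePresentation R N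

namespace IsCoherentModule

variable {R : Type*} [Ring R] {M N : Type*} [AddCommGroup M] [Module R M]
  [AddCommGroup N] [Module R N]

theorem finitePresentation_of_injective (hN : IsCoherentModule R N) [Module.Finite R M]
    {f : M →ₗ[R] N} (hf : Function.Injective f) : Module.FinitePresentation R M :=
  have := hN _ (Submodule.fg_range f)
  .of_equiv (LinearEquiv.ofInjective f hf).symm

theorem of_injective (hN : IsCoherentModule R N) {f : M →ₗ[R] N} (hf : Function.Injective f) :
    IsCoherentModule R M := fun K hK =>
  have : Module.Finite R K := .of_fg hK
  hN.finitePresentation_of_injective (f := f ∘ₗ K.subtype) (hf.comp K.injective_subtype)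

theorem fg_ker (hN : IsCoherentModule R N) [Module.Finite R M] (f : M →ₗ[R] N) :
    (LinearMap.ker f).FG := by
  have := hN _ (Submodule.fg_range f)
  simpa using Module.FinitePresentation.fg_ker f.rangeRestrict f.surjective_rangeRestrict

theorem of_ker (hN : IsCoherentModule R N) (f : M →ₗ[R] N)
    (hker : IsCoherentModule R (LinearMap.ker f)) : IsCoherentModule R M := fun K hK => by
  have : Module.Finite R K := .of_fg hK
  let g := f ∘ₗ K.subtype
  have : Module.FinitePresentation R (LinearMap.range g) := hN _ (Submodule.fg_range g)
  have : Module.Finite R (LinearMap.ker g.rangeRestrict) := .of_fg (by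
    simpa using hN.fg_ker g)
  let i : LinearMap.ker g.rangeRestrict →ₗ[R] LinearMap.ker f :=
    (K.subtype ∘ₗ (LinearMap.ker g.rangeRestrict).subtype).codRestrict _ fun x => by
      simpa [g] using x.2
  have : Module.FinitePresentation R (LinearMap.ker g.rangeRestrict) :=
    hker.finitePresentation_of_injective (f := i) fun x y hxy =>
      Subtype.ext (Subtype.ext congr($(hxy).1))
  exact Module.finitePresentation_of_ker g.rangeRestrict g.surjective_rangeRestrict

theorem pi_fin (hR : IsCoherentModule R R) : ∀ n : ℕ, IsCoherentModule R (Fin n → R)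
  | 0 => fun _ _ => inferInstance
  | n + 1 => by
    refine hR.of_ker (LinearMap.proj 0) ((pi_fin hR n).of_injective
      (f := LinearMap.funLeft R R Fin.succ ∘ₗ (LinearMap.ker (LinearMap.proj 0)).subtype) ?_)
    intro x y hxy
    ext i
    refine Fin.cases ?_ (fun j => congr_fun hxy j) i
    exact (LinearMap.mem_ker.mp x.2).trans (LinearMap.mem_ker.mp y.2).symm

end IsCoherentModule

section
variable {R : Type u} [CommRing R] {N : Type u} [AddCommGroup N] [Module R N]

theorem Submodule.dualAnnihilator_span_range_eq_ker {ι : Type*} (v : ι → N) :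
    (Submodule.span R (Set.range v)).dualAnnihilator =
      LinearMap.ker (LinearMap.pi fun i => Dual.eval R N (v i)) := by
  ext φ
  rw [← SetLike.mem_coe, Submodule.coe_dualAnnihilator_span]
  simp [Set.range_subset_iff, funext_iff]

variable [Module.Projective R N] [Module.Finite R N]

theorem Submodule.dualAnnihilator_dualCoannihilator_eq_of_isFPInjective
    (hR : IsFPInjective R R) {K : Submodule R N} (hK : K.FG) :
    K.dualAnnihilator.dualCoannihilator = K := by
  refine le_antisymm (fun x hx => ?_) K.le_dualAnnihilator_dualCoannihilator
  obtain ⟨m, v, rfl⟩ := Submodule.fg_iff_exists_fin_generating_family.mp hK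
  rw [Submodule.dualAnnihilator_span_range_eq_ker, Submodule.mem_dualCoannihilator] at hx
  obtain ⟨ψ, hψ⟩ := hR.exists_comp_eq_of_ker_le _ (Dual.eval R N x) hx
  have hx_eq : x = ∑ j, ψ (Pi.single j 1) • v j := by
    rw [← sub_eq_zero, ← forall_dual_apply_eq_zero_iff R]
    intro φ
    have hφx : φ x = ψ (fun j => φ (v j)) := (LinearMap.congr_fun hψ φ).symm
    rw [map_sub, sub_eq_zero, hφx, pi_eq_sum_univ' fun j => φ (v j)]
    simp [mul_comm]
  rw [hx_eq]
  exact Submodule.sum_mem _ fun j _ => Submodule.smul_mem _ _ (Submodule.subset_span ⟨j, rfl⟩)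

theorem Submodule.exists_injective_quotient_to_pi (hR : IsFPInjective R R)
    (hcoh : IsCoherentRing R) {K : Submodule R N} (hK : K.FG) :
    ∃ (k : ℕ) (e : (N ⧸ K) →ₗ[R] (Fin k → R)), Function.Injective e := by
  obtain ⟨m, v, hv⟩ := Submodule.fg_iff_exists_fin_generating_family.mp hK
  have hann : K.dualAnnihilator.FG := by
    rw [← hv, Submodule.dualAnnihilator_span_range_eq_ker]
    exact (IsCoherentModule.pi_fin hcoh m).fg_ker _
  obtain ⟨k, c, hc⟩ := Submodule.fg_iff_exists_fin_generating_family.mp hann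
  have hE : LinearMap.ker (LinearMap.pi c) = K := by
    rw [← K.dualAnnihilator_dualCoannihilator_eq_of_isFPInjective hR hK, ← hc,
      Submodule.dualCoannihilator, Submodule.dualAnnihilator_span_range_eq_ker]
    ext x
    simp [funext_iff]
  exact ⟨k, K.liftQ _ hE.ge, by rw [← LinearMap.ker_eq_bot, K.ker_liftQ_eq_bot _ _ hE.le]⟩

end

theorem IsCoherentRing.isIFRing {R : Type u} [CommRing R] (hcoh : IsCoherentRing R)
    (hR : IsFPInjective R R) : IsIFRing R := by
  intro M _
  refine Module.Flat.of_forall_exists_factorization fun {l f x} hxf => ?_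
  obtain ⟨k, e, he⟩ :=
    (R ∙ f).exists_injective_quotient_to_pi hR hcoh (Submodule.fg_span_singleton f)
  have hfx : R ∙ f ≤ LinearMap.ker x := (Submodule.span_singleton_le_iff_mem _ _).mpr hxf
  obtain ⟨y, hy⟩ := Module.Injective.extension_property R M _ _ e he ((R ∙ f).liftQ x hfx)
  let ε := Finsupp.linearEquivFunOnFinite R R (Fin k)
  refine ⟨k, ε.symm ∘ₗ e ∘ₗ (R ∙ f).mkQ, y ∘ₗ ε, ?_, ?_⟩
  · ext i
    simp [← LinearMap.comp_apply y e, hy]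
  · simp [(Submodule.Quotient.mk_eq_zero _).mpr (Submodule.mem_span_singleton_self f)]

/-- Let `R` be a commutative self FP-injective ring. If `R` is coherent,
then `R` is semicoherent. -/
theorem coherent_implies_semicoherent_of_selfFPInjective (R : Type u) [CommRing R]
    (hself : IsFPInjective R R) (hcoh : IsCoherentRing R) :
    IsSemicoherentRing R := by
  intro E F _ _
  refine ⟨ModuleCat.of R (E → F), LinearMap.ltoFun R E F R, ?_, DFunLike.coe_injective⟩
  exact hcoh.isIFRing hself _ (Module.Injective.pi R fun _ : E => F)
end

section
/- Let R be a commutative self FP-injective ring. If R is semicoherent, then R is coherent. -/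
universe u

open CategoryTheory

/-!
Write a finitely generated ideal as the image of `b : Rⁿ → R` with module of relations `K`.
Semicoherence embeds `R^K` into a flat module (via `Hom(E, E^K)` for an injective `E ⊇ R`), so the
equational criterion of flatness, applied to the tautological relation `∑ bᵢ ξᵢ = 0` in `R^K`
(`ξᵢ k = kᵢ`), gives a matrix `a` with `b a = 0` such that `d a = 0` forces `d ⬝ k = 0` for all
`k ∈ K`. Self FP-injectivity extends the functional `d a ↦ d ⬝ k` from the finitely generated row
image of `a` to all of `Rᵐ`, which puts `k` in the column span of `a`. Hence `K` is spanned by the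
columns of `a`.
-/

open Matrix

namespace CategoryTheory.ProjectiveResolution

variable {R : Type*} [Ring R] {C : Type*} [Category C] [Abelian C] [Linear R C]
  [EnoughProjectives C]

theorem exists_d_comp_eq_of_subsingleton_ext {X Y : C} (Q : ProjectiveResolution X)
    [Subsingleton (((Ext R C 1).obj (Opposite.op X)).obj Y)]
    (g : Q.complex.X 1 ⟶ Y) (hg : Q.complex.d 2 1 ≫ g = 0) :
    ∃ h : Q.complex.X 0 ⟶ Y, Q.complex.d 1 0 ≫ h = g := by
  have hzero : Limits.IsZero ((Q.complex.linearYonedaObj R Y).homology 1) :=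
    (ModuleCat.isZero_of_subsingleton _).of_iso (Q.isoExt 1 Y).symm
  have hexact := (HomologicalComplex.exactAt_iff' _ 0 1 2 (by simp) (by simp)).mp
    ((HomologicalComplex.exactAt_iff_isZero_homology _ 1).mpr hzero)
  rw [ShortComplex.moduleCat_exact_iff] at hexact
  exact hexact g hg

end CategoryTheory.ProjectiveResolution

section FPInjective

variable {R : Type u} [CommRing R]

theorem exists_extend_of_subsingleton_ext {P N : Type u} [AddCommGroup P] [Module R P]
    [Module.Projective R P] [AddCommGroup N] [Module R N] (W : Submodule R P)
    [Subsingleton (((Ext R (ModuleCat.{u} R) 1).obj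
      (Opposite.op (ModuleCat.of R (P ⧸ W)))).obj (ModuleCat.of R N))]
    (φ : W →ₗ[R] N) : ∃ ψ : P →ₗ[R] N, ψ ∘ₗ W.subtype = φ := by
  let Q := ProjectiveResolution.of (ModuleCat.of R (P ⧸ W))
  let d₁ := (Q.complex.d 1 0).hom
  let π₀ := (Q.π.f 0).hom
  have hπ₀ : Function.Surjective π₀ :=
    (ModuleCat.epi_iff_surjective (Q.π.f 0)).mp inferInstance
  have hd₁π₀ : π₀ ∘ₗ d₁ = 0 := congrArg ModuleCat.Hom.hom Q.complex_d_comp_π_f_zero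
  have hexact : LinearMap.range d₁ = LinearMap.ker π₀ :=
    (ShortComplex.moduleCat_exact_iff_range_eq_ker _).mp Q.exact₀
  have : Module.Projective R (Q.complex.X 0) :=
    (IsProjective.iff_projective _).mpr (Q.projective 0)
  obtain ⟨f, hf⟩ := Module.projective_lifting_property W.mkQ π₀ W.mkQ_surjective
  obtain ⟨β, hβ⟩ := Module.projective_lifting_property π₀ W.mkQ hπ₀
  -- `f` and `β` compare the resolution with the presentation `W → P → P ⧸ W`.
  let α : Q.complex.X 1 →ₗ[R] W := (f ∘ₗ d₁).codRestrict W fun x =>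
    (Submodule.Quotient.mk_eq_zero W).mp <| (LinearMap.congr_fun hf (d₁ x)).trans
      (LinearMap.congr_fun hd₁π₀ x)
  let τ : P →ₗ[R] W := (f ∘ₗ β - LinearMap.id).codRestrict W fun x =>
    (Submodule.Quotient.mk_eq_zero W).mp <| by
      rw [LinearMap.sub_apply, Submodule.Quotient.mk_sub, sub_eq_zero]
      exact (LinearMap.congr_fun hf (β x)).trans (LinearMap.congr_fun hβ x)
  obtain ⟨h, hh⟩ := Q.exists_d_comp_eq_of_subsingleton_ext (R := R)
    (ModuleCat.ofHom (φ ∘ₗ α)) <| by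
      have hd : d₁ ∘ₗ (Q.complex.d 2 1).hom = 0 :=
        congrArg ModuleCat.Hom.hom (Q.complex.d_comp_d 2 1 0)
      ext x
      have : α ((Q.complex.d 2 1).hom x) = 0 := Subtype.ext <| by
        change f (d₁ _) = 0
        rw [← LinearMap.comp_apply d₁, hd, LinearMap.zero_apply, map_zero]
      simp [this]
  -- On `W`, `h ∘ β` agrees with `φ ∘ f ∘ β`, which `τ` corrects to `φ`.
  refine ⟨h.hom ∘ₗ β - φ ∘ₗ τ, LinearMap.ext fun w => ?_⟩
  obtain ⟨q, hq⟩ : β w ∈ LinearMap.range d₁ := by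
    rw [hexact, LinearMap.mem_ker, ← LinearMap.comp_apply, hβ]
    exact (Submodule.Quotient.mk_eq_zero W).mpr w.2
  have hαq : α q - τ w = w := Subtype.ext <| by simp [α, τ, hq]
  have hhq : h.hom (d₁ q) = φ (α q) := LinearMap.congr_fun (congrArg ModuleCat.Hom.hom hh) q
  change h.hom (β w) - φ (τ w) = φ w
  rw [← hq, hhq, ← map_sub, hαq]

end FPInjective

namespace IsFPInjective

variable {R : Type u} [CommRing R] {N : Type u} [AddCommGroup N] [Module R N]

theorem exists_extend (hN : IsFPInjective R N) {P : Type u} [AddCommGroup P] [Module R P]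
    [Module.Projective R P] [Module.FinitePresentation R P] {W : Submodule R P} (hW : W.FG)
    (φ : W →ₗ[R] N) : ∃ ψ : P →ₗ[R] N, ψ ∘ₗ W.subtype = φ :=
  have := hN (ModuleCat.of R (P ⧸ W)) <|
    Module.finitePresentation_of_surjective W.mkQ W.mkQ_surjective (by rwa [W.ker_mkQ])
  exists_extend_of_subsingleton_ext W φ

theorem exists_comp_eq_of_ker_le_s1 (hN : IsFPInjective R N) {M : Type*} [AddCommGroup M]
    [Module R M] [Module.Finite R M] {P : Type u} [AddCommGroup P] [Module R P]
    [Module.Projective R P] [Module.FinitePresentation R P] (ρ : M →ₗ[R] P) (f : M →ₗ[R] N)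
    (h : LinearMap.ker ρ ≤ LinearMap.ker f) : ∃ ψ : P →ₗ[R] N, ψ ∘ₗ ρ = f := by
  obtain ⟨ψ, hψ⟩ := hN.exists_extend (Submodule.fg_range ρ)
    ((LinearMap.ker ρ).liftQ f h ∘ₗ ρ.quotKerEquivRange.symm.toLinearMap)
  refine ⟨ψ, LinearMap.ext fun m => ?_⟩
  have := LinearMap.congr_fun hψ ⟨ρ m, LinearMap.mem_range_self ρ m⟩
  simpa [LinearMap.quotKerEquivRange_symm_apply_image] using this

theorem mem_range_mulVecLin (hR : IsFPInjective R R) {ι : Type*} [Fintype ι] [DecidableEq ι]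
    {m : ℕ} (a : Matrix ι (Fin m) R) {k : ι → R}
    (hk : ∀ d, d ᵥ* a = 0 → d ⬝ᵥ k = 0) : k ∈ LinearMap.range a.mulVecLin := by
  obtain ⟨ψ, hψ⟩ := hR.exists_comp_eq_of_ker_le_s1 a.vecMulLinear (dotProductEquiv R ι k)
    fun d hd => by simpa [dotProduct_comm] using hk d hd
  set t := (dotProductEquiv R (Fin m)).symm ψ
  have hψt (z : Fin m → R) : ψ z = t ⬝ᵥ z :=
    (LinearMap.congr_fun ((dotProductEquiv R (Fin m)).apply_symm_apply ψ) z).symm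
  refine ⟨t, funext fun i => ?_⟩
  calc (a *ᵥ t) i = Pi.single i 1 ⬝ᵥ (a *ᵥ t) := by rw [single_one_dotProduct]
    _ = t ⬝ᵥ (Pi.single i 1 ᵥ* a) := by rw [dotProduct_mulVec, dotProduct_comm]
    _ = k ⬝ᵥ Pi.single i 1 := by rw [← hψt]; exact LinearMap.congr_fun hψ _
    _ = k i := dotProduct_single_one k i

end IsFPInjective

theorem Module.Flat.exists_matrix_of_sum_smul_eq_zero {R V M : Type*} [CommRing R]
    [AddCommGroup V] [Module R V] [AddCommGroup M] [Module R M] [Module.Flat R M]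
    (j : V →ₗ[R] M) (hj : Function.Injective j) {ι : Type*} [Fintype ι] {b : ι → R}
    {ξ : ι → V} (h : ∑ i, b i • ξ i = 0) :
    ∃ (m : ℕ) (a : Matrix ι (Fin m) R),
      b ᵥ* a = 0 ∧ ∀ d : ι → R, d ᵥ* a = 0 → ∑ i, d i • ξ i = 0 := by
  obtain ⟨m, (a : Matrix ι (Fin m) R), y, hξ, hb⟩ :=
    Module.Flat.isTrivialRelation_of_sum_smul_eq_zero (f := b) (x := j ∘ ξ)
      (by simp only [Function.comp_apply, ← map_smul, ← map_sum, h, map_zero])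
  refine ⟨m, a, funext hb, fun d hd => hj ?_⟩
  simp only [Function.comp_apply] at hξ
  calc j (∑ i, d i • ξ i) = ∑ l, (d ᵥ* a) l • y l := by
        simp only [map_sum, map_smul, hξ, Finset.smul_sum, smul_smul]
        rw [Finset.sum_comm]
        simp only [vecMul, dotProduct, Finset.sum_smul]
    _ = j 0 := by simp [hd]

theorem exists_injective_linearMap_to_injective (R : Type u) [Ring R] (M : Type u)
    [AddCommGroup M] [Module R M] :
    ∃ (E : ModuleCat.{u} R) (e : M →ₗ[R] E), Module.Injective R E ∧ Function.Injective e := by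
  let E := Injective.under (ModuleCat.of R M)
  have : Injective (ModuleCat.of R E) := inferInstanceAs (Injective E)
  exact ⟨E, (Injective.ι (ModuleCat.of R M)).hom, Module.injective_module_of_injective_object R E,
    (ModuleCat.mono_iff_injective _).mp inferInstance⟩

theorem IsSemicoherentRing.exists_injective_pi_to_flat {R : Type u} [CommRing R]
    (hR : IsSemicoherentRing R) (X : Type u) :
    ∃ (M : ModuleCat.{u} R) (j : (X → R) →ₗ[R] M), Module.Flat R M ∧ Function.Injective j := by
  obtain ⟨E, e, hE, he⟩ := exists_injective_linearMap_to_injective R R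
  obtain ⟨M, f, hM, hf⟩ := hR E (ModuleCat.of R (X → E)) hE inferInstance
  let θ : (X → R) →ₗ[R] E →ₗ[R] (X → E) :=
    LinearMap.mk₂ R (fun x v l => x l • v) (fun _ _ _ => funext fun _ => add_smul ..)
      (fun _ _ _ => funext fun _ => mul_smul ..) (fun _ _ _ => funext fun _ => smul_add ..)
      (fun _ _ _ => funext fun _ => smul_comm ..)
  -- `θ x` sends `e 1` to `(e (x l))_l`.
  have hθ : Function.Injective θ := fun x y hxy => funext fun l => he <| by
    simpa [θ, ← map_smul] using congrFun (LinearMap.congr_fun hxy (e 1)) l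
  exact ⟨M, f ∘ₗ θ, hM, hf.comp hθ⟩

theorem IsSemicoherentRing.fg_ker_of_isFPInjective {R : Type u} [CommRing R]
    (hsemi : IsSemicoherentRing R) (hself : IsFPInjective R R) {n : ℕ}
    (g : (Fin n → R) →ₗ[R] R) : (LinearMap.ker g).FG := by
  classical
  set b := (dotProductEquiv R (Fin n)).symm g
  have hg (d : Fin n → R) : g d = b ⬝ᵥ d :=
    (LinearMap.congr_fun ((dotProductEquiv R (Fin n)).apply_symm_apply g) d).symm
  obtain ⟨M, j, hM, hj⟩ := hsemi.exists_injective_pi_to_flat (LinearMap.ker g)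
  let ξ : Fin n → LinearMap.ker g → R := fun i k => (k : Fin n → R) i
  have hrel : ∑ i, b i • ξ i = 0 := funext fun k => by
    simpa [ξ, dotProduct] using (hg k).symm.trans k.2
  obtain ⟨m, a, hba, ha⟩ := Module.Flat.exists_matrix_of_sum_smul_eq_zero j hj hrel
  suffices LinearMap.ker g = LinearMap.range a.mulVecLin from this ▸ Submodule.fg_range _
  apply le_antisymm
  · intro k hk
    refine hself.mem_range_mulVecLin a fun d hd => ?_
    simpa [ξ, dotProduct] using congrFun (ha d hd) ⟨k, hk⟩
  · rintro _ ⟨t, rfl⟩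
    rw [LinearMap.mem_ker, Matrix.mulVecLin_apply, hg, dotProduct_mulVec, hba, zero_dotProduct]

/-- Let `R` be a commutative self FP-injective ring. If `R` is semicoherent,
then `R` is coherent. -/
theorem semicoherent_implies_coherent_of_selfFPInjective (R : Type u) [CommRing R]
    (hself : IsFPInjective R R) (hsemi : IsSemicoherentRing R) :
    IsCoherentRing R := by
  intro I hI
  have : Module.Finite R I := Module.Finite.iff_fg.mpr hI
  obtain ⟨n, f, hf⟩ := Module.Finite.exists_fin' R I
  rw [← Module.FinitePresentation.fg_ker_iff f hf,
    ← LinearMap.ker_comp_of_ker_eq_bot f I.ker_subtype]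
  exact hsemi.fg_ker_of_isFPInjective hself _
end

section
/- Let R be an arithmetical ring such that every finitely generated R-module has finite Goldie dimension and such that R_P is coherent for every maximal ideal P. Then R is coherent. -/
universe u

open CategoryTheory

/-!
Finitely generated ideals are built from principal ones by finite sums. The ideal `(x)` is
finitely presented iff `ann x` is finitely generated, and `I + J` is finitely presented when `I`
and `J` are and `I ∩ J` is finitely generated. Both `ann x` and `I ∩ J` are finitely generated
locally: `(ann x)_P = ann (x/1)` by coherence of `R_P`, and `(I ∩ J)_P` is the smaller of `I_P`,
`J_P` since `R_P` is a valuation ring. So everything reduces to showing that a locally finitely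
generated ideal `J` is finitely generated.

If it is not, choose inductively `y_k ∈ J` and maximal ideals `P_k` with `J_{P_k} = (y_k) ≠ 0` and
`y_i ∈ P_k J` locally at `P_k` for all `i ≠ k`; by Nakayama no `y_k` lies in the ideal generated
by the others. For `L = Σ_{j ≠ k} (y_j) ∩ (y_k)` the images of the `y_k` in `R/L` are then
nonzero, and since `R` is arithmetical their annihilators `(L : y_k)` are pairwise comaximal. A
module of finite Goldie dimension has no such infinite family: its injective hull is a finite
direct sum of indecomposable injectives, which are uniform, so two of the elements have nonzero
components in the same summand, and these generate submodules with trivial intersection.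
-/

theorem Ideal.isPrincipal_of_fg_of_total {S : Type*} [CommRing S]
    (htot : ∀ I J : Ideal S, I ≤ J ∨ J ≤ I) {I : Ideal S} (hI : I.FG) : I.IsPrincipal := by
  induction I, hI using Submodule.fg_induction with
  | singleton x => exact ⟨x, rfl⟩
  | sup I J hI hJ =>
    rcases htot I J with h | h
    · rwa [sup_eq_right.mpr h]
    · rwa [sup_eq_left.mpr h]

theorem IsLocalRing.le_maximalIdeal_mul_of_lt_span_singleton {S : Type*} [CommRing S]
    [IsLocalRing S] {I : Ideal S} {z : S} (h : I < Ideal.span {z}) :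
    I ≤ IsLocalRing.maximalIdeal S * Ideal.span {z} := by
  intro x hx
  obtain ⟨a, rfl⟩ := Ideal.mem_span_singleton'.mp (h.le hx)
  have ha : a ∈ IsLocalRing.maximalIdeal S := fun hunit =>
    h.not_ge ((Ideal.span_singleton_le_iff_mem _).mpr ((Ideal.unit_mul_mem_iff_mem _ hunit).mp hx))
  exact Ideal.mul_mem_mul ha (Ideal.mem_span_singleton_self z)

theorem Ideal.torsionOf_quotient_mk {R : Type*} [CommRing R] (L : Ideal R) (y : R) :
    Ideal.torsionOf R (R ⧸ L) (Ideal.Quotient.mk L y) = L.colon {y} := by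
  ext r
  rw [Ideal.mem_torsionOf_iff, Submodule.mem_colon_singleton, Algebra.smul_def,
    Ideal.Quotient.algebraMap_eq, ← map_mul, Ideal.Quotient.eq_zero_iff_mem, smul_eq_mul]

theorem Submodule.disjoint_span_singleton_of_torsionOf_sup_eq_top {R : Type*} [CommRing R]
    {M : Type*} [AddCommGroup M] [Module R M] {z w : M}
    (h : Ideal.torsionOf R M z ⊔ Ideal.torsionOf R M w = ⊤) : Disjoint (R ∙ z) (R ∙ w) := by
  obtain ⟨p, hp, q, hq, hpq⟩ := Submodule.mem_sup.mp (h ▸ Submodule.mem_top : (1 : R) ∈ _)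
  rw [Ideal.mem_torsionOf_iff] at hp hq
  refine Submodule.disjoint_def.mpr fun v hz hw => ?_
  obtain ⟨r, rfl⟩ := Submodule.mem_span_singleton.mp hz
  obtain ⟨s, hs⟩ := Submodule.mem_span_singleton.mp hw
  calc r • z = (p + q) • r • z := by rw [hpq, one_smul]
    _ = r • p • z + s • q • w := by rw [add_smul, smul_comm p r, ← hs, smul_comm q s]
    _ = 0 := by rw [hp, hq, smul_zero, smul_zero, add_zero]

theorem IsLocalization.exists_mem_map_eq_span_singleton {R S : Type*} [CommRing R] [CommRing S]
    [Algebra R S] (M : Submonoid R) [IsLocalization M S] {I : Ideal R}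
    (h : (I.map (algebraMap R S)).IsPrincipal) :
    ∃ a ∈ I, I.map (algebraMap R S) = Ideal.span {algebraMap R S a} := by
  obtain ⟨z, hz⟩ := h
  have hzI : z ∈ I.map (algebraMap R S) := hz ▸ Submodule.mem_span_singleton_self z
  obtain ⟨⟨⟨a, ha⟩, s⟩, hzs⟩ := (IsLocalization.mem_map_algebraMap_iff M S).mp hzI
  refine ⟨a, ha, ?_⟩
  rw [hz, ← hzs, Ideal.span_singleton_mul_right_unit (IsLocalization.map_units S s)]

theorem IsLocalization.map_torsionOf {R S : Type*} [CommRing R] [CommRing S]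
    [Algebra R S] (M : Submonoid R) [IsLocalization M S] (x : R) :
    (Ideal.torsionOf R R x).map (algebraMap R S) = Ideal.torsionOf S S (algebraMap R S x) := by
  ext z
  obtain ⟨r, s, rfl⟩ := IsLocalization.exists_mk'_eq M z
  simp only [IsLocalization.mk'_mem_map_algebraMap_iff, Ideal.mem_torsionOf_iff, smul_eq_mul]
  rw [← IsLocalization.mk'_one (M := M) S x, ← IsLocalization.mk'_mul, mul_one,
    IsLocalization.mk'_eq_zero_iff]
  simp [mul_assoc]

theorem Ideal.map_eq_bot_of_map_le_map_mul {R : Type*} [CommRing R] (P : Ideal R) [P.IsPrime]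
    {J : Ideal R} (hfg : (J.map (algebraMap R (Localization.AtPrime P))).FG)
    (hle : J.map (algebraMap R (Localization.AtPrime P)) ≤
      (P * J).map (algebraMap R (Localization.AtPrime P))) :
    J.map (algebraMap R (Localization.AtPrime P)) = ⊥ := by
  rw [Ideal.map_mul, Localization.AtPrime.map_eq_maximalIdeal, ← smul_eq_mul] at hle
  exact Submodule.eq_bot_of_le_smul_of_le_jacobson_bot _ _ hfg hle
    (IsLocalRing.jacobson_eq_maximalIdeal ⊥ bot_ne_top).ge

theorem Ideal.finitePresentation_span_singleton_iff {R : Type*} [CommRing R] (x : R) :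
    Module.FinitePresentation R (Ideal.span {x}) ↔ (Ideal.torsionOf R R x).FG := by
  rw [← (Ideal.quotTorsionOfEquivSpanSingleton R R x).finitePresentation_iff,
    ← Module.FinitePresentation.fg_ker_iff _ (Submodule.mkQ_surjective _), Submodule.ker_mkQ]
  rfl

theorem Ideal.finitePresentation_sup {R : Type*} [CommRing R] {I J : Ideal R}
    [Module.FinitePresentation R I] [Module.FinitePresentation R J] (h : (I ⊓ J).FG) :
    Module.FinitePresentation R ↥(I ⊔ J) := by
  let l := (Submodule.inclusion (le_sup_left : I ≤ I ⊔ J)).coprod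
    (Submodule.inclusion le_sup_right)
  have hl : Function.Surjective l := by
    rintro ⟨v, hv⟩
    obtain ⟨a, ha, b, hb, rfl⟩ := Submodule.mem_sup.mp hv
    exact ⟨(⟨a, ha⟩, ⟨b, hb⟩), rfl⟩
  let s : ↥(I ⊓ J) →ₗ[R] I × J :=
    (Submodule.inclusion inf_le_left).prod (-Submodule.inclusion inf_le_right)
  have hker : LinearMap.ker l = LinearMap.range s := by
    refine le_antisymm ?_ (LinearMap.range_le_ker_iff.mpr ?_)
    · rintro ⟨⟨a, ha⟩, ⟨b, hb⟩⟩ hab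
      have hneg : -a = b := neg_eq_of_add_eq_zero_right (congrArg Subtype.val hab)
      refine ⟨⟨a, ha, neg_neg a ▸ J.neg_mem (hneg ▸ hb)⟩, ?_⟩
      exact Prod.ext rfl (Subtype.ext hneg)
    · ext z
      simp [l, s]
  have : Module.Finite R ↥(I ⊓ J) := Module.Finite.iff_fg.mpr h
  exact Module.finitePresentation_of_surjective l hl (hker ▸ Submodule.fg_range s)

section Uniform

variable {R : Type*} [CommRing R] {Q : Type*} [AddCommGroup Q] [Module R Q]

theorem Submodule.exists_le_maximal_disjoint {A B : Submodule R Q} (h : Disjoint B A) :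
    ∃ C, B ≤ C ∧ Maximal (Disjoint · A) C :=
  zorn_le_nonempty₀ {C | Disjoint C A} (fun c hc hchain _ _ =>
    ⟨sSup c, hchain.directedOn.disjoint_sSup_left.mpr hc, fun _ hz => le_sSup hz⟩) B h

theorem Module.Injective.exists_eq_self_on_eq_zero_on [Module.Injective R Q]
    {D C : Submodule R Q} (h : Disjoint D C) :
    ∃ f : Q →ₗ[R] Q, (∀ x ∈ D, f x = x) ∧ ∀ x ∈ C, f x = 0 := by
  let idD : Q →ₗ.[R] Q := ⟨D, D.subtype⟩
  let zeroC : Q →ₗ.[R] Q := ⟨C, 0⟩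
  have agree : ∀ (x : idD.domain) (y : zeroC.domain), (x : Q) = y → idD x = zeroC y :=
    fun x y hxy => by simpa [idD, zeroC] using Submodule.disjoint_def.mp h x x.2 (hxy ▸ y.2)
  let g := idD.sup zeroC agree
  obtain ⟨f, hf⟩ := Module.Injective.out g.domain.subtype g.domain.injective_subtype g.toFun
  refine ⟨f, fun x hx => ?_, fun x hx => ?_⟩
  · have hg := LinearPMap.sup_apply agree ⟨x, hx⟩ 0 ⟨x, Submodule.mem_sup_left hx⟩
      (by simp)
    exact (hf _).trans (hg.trans (by simp [idD]))
  · have hg := LinearPMap.sup_apply agree 0 ⟨x, hx⟩ ⟨x, Submodule.mem_sup_right hx⟩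
      (by simp)
    exact (hf _).trans (hg.trans (by simp [zeroC]))

theorem Module.Injective.isCompl_of_maximal_disjoint [Module.Injective R Q]
    {A C D : Submodule R Q} (hC : Maximal (Disjoint · A) C) (hD : Maximal (Disjoint · C) D)
    (hAD : A ≤ D) : IsCompl D C := by
  obtain ⟨f, hfD, hfC⟩ := Module.Injective.exists_eq_self_on_eq_zero_on hD.prop
  -- By maximality of `C`, some nonzero `a ∈ A` equals `c + r • x`; applying `f` gives
  -- `a = r • f x`.
  have hmem_C : ∀ x, f x ∈ C → x ∈ C := by
    intro x hx
    by_contra hxC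
    have hA : ¬ Disjoint (C ⊔ R ∙ x) A := fun hdisj =>
      hxC (hC.2 hdisj le_sup_left (Submodule.mem_sup_right (Submodule.mem_span_singleton_self x)))
    obtain ⟨a, ⟨haCx, haA⟩, ha0⟩ :=
      Submodule.exists_mem_ne_zero_of_ne_bot (disjoint_iff.not.mp hA)
    obtain ⟨c, hc, _, hrx, rfl⟩ := Submodule.mem_sup.mp haCx
    obtain ⟨r, rfl⟩ := Submodule.mem_span_singleton.mp hrx
    have haC : c + r • x ∈ C := by
      rw [← hfD _ (hAD haA), map_add, map_smul, hfC c hc, zero_add]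
      exact C.smul_mem r hx
    exact ha0 (Submodule.disjoint_def.mp hC.1 _ haC haA)
  have hker : LinearMap.ker f ≤ C := fun x hx =>
    hmem_C x ((LinearMap.mem_ker.mp hx).symm ▸ C.zero_mem)
  have hrange : LinearMap.range f ≤ D := by
    refine hD.2 (Submodule.disjoint_def.mpr ?_) fun x hx => ⟨x, hfD x hx⟩
    rintro _ ⟨x, rfl⟩ hx
    exact hfC x (hmem_C x hx)
  refine ⟨hD.1, codisjoint_iff.mpr (eq_top_iff.mpr fun x _ => ?_)⟩
  have hfx : f x ∈ D := hrange ⟨x, rfl⟩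
  have hker_x : x - f x ∈ C := hker (by simp [hfD _ hfx])
  exact Submodule.mem_sup.mpr ⟨f x, hfx, x - f x, hker_x, add_sub_cancel _ _⟩

theorem Module.Injective.eq_bot_or_eq_bot_of_disjoint [Module.Injective R Q]
    (hind : ∀ A B : Submodule R Q, IsCompl A B → A = ⊥ ∨ B = ⊥)
    {A B : Submodule R Q} (h : Disjoint A B) : A = ⊥ ∨ B = ⊥ := by
  obtain ⟨C, hBC, hC⟩ := Submodule.exists_le_maximal_disjoint h.symm
  obtain ⟨D, hAD, hD⟩ := Submodule.exists_le_maximal_disjoint hC.1.symm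
  refine (hind D C (isCompl_of_maximal_disjoint hC hD hAD)).imp (fun hD0 => ?_) (fun hC0 => ?_)
  · exact le_bot_iff.mp (hD0 ▸ hAD)
  · exact le_bot_iff.mp (hC0 ▸ hBC)

end Uniform

theorem IsIndecomposableSubmodule.eq_bot_or_eq_bot_of_isCompl {R : Type u} [CommRing R]
    {M : Type u} [AddCommGroup M] [Module R M] {N : Submodule R M}
    (hN : IsIndecomposableSubmodule N) {A B : Submodule R N} (h : IsCompl A B) :
    A = ⊥ ∨ B = ⊥ := by
  have hmap : Function.Injective (Submodule.map N.subtype) :=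
    Submodule.map_injective_of_injective N.injective_subtype
  refine (hN.2 (A.map N.subtype) (B.map N.subtype) (Submodule.map_subtype_le _ _)
    (Submodule.map_subtype_le _ _) ?_ ?_).imp (fun hA => hmap ?_) (fun hB => hmap ?_)
  · rw [← Submodule.map_inf _ N.injective_subtype, h.inf_eq_bot, Submodule.map_bot]
  · rw [← Submodule.map_sup, h.sup_eq_top, Submodule.map_subtype_top]
  · rw [hA, Submodule.map_bot]
  · rw [hB, Submodule.map_bot]

theorem HasFiniteGoldieDimension.not_pairwise_torsionOf_sup_eq_top {R : Type u} [CommRing R]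
    {M : Type u} [AddCommGroup M] [Module R M] (hM : HasFiniteGoldieDimension R M)
    {ι : Type*} [Infinite ι] (m : ι → M) (hm : ∀ i, m i ≠ 0) :
    ¬ Pairwise fun i j => Ideal.torsionOf R M (m i) ⊔ Ideal.torsionOf R M (m j) = ⊤ := by
  intro hcomax
  obtain ⟨E, f, n, N, ⟨-, hf, -⟩, hindep, hsup, hN⟩ := hM
  let e := LinearEquiv.ofBijective (DirectSum.coeLinearMap N)
    (DirectSum.isInternal_submodule_of_iSupIndep_of_iSup_eq_top hindep hsup)
  let π i : E →ₗ[R] N i := DirectSum.component R _ _ i ∘ₗ e.symm.toLinearMap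
  have hπ : ∀ x, (∀ i, π i x = 0) → x = 0 := fun x hx =>
    e.symm.injective ((DFinsupp.ext fun i => hx i).trans (map_zero e.symm).symm)
  have hcomp : ∀ k, ∃ i, π i (f (m k)) ≠ 0 := fun k => by
    by_contra! h
    exact hm k (hf (by simpa using hπ _ h))
  choose c hc using hcomp
  obtain ⟨j, k, hjk, hcjk⟩ := Finite.exists_ne_map_eq_of_infinite c
  have htors : ∀ i l, Ideal.torsionOf R M (m l) ≤ Ideal.torsionOf R (N i) (π i (f (m l))) :=
    fun i l r hr => by
      rw [Ideal.mem_torsionOf_iff] at hr ⊢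
      rw [← map_smul, ← map_smul, hr, map_zero, map_zero]
  have hcj := hc j
  rw [hcjk] at hcj
  have hdisj := Submodule.disjoint_span_singleton_of_torsionOf_sup_eq_top
    (top_unique ((hcomax hjk).ge.trans (sup_le_sup (htors (c k) j) (htors (c k) k))))
  have hinj : Module.Injective R (N (c k)) := (hN (c k)).2
  rcases hinj.eq_bot_or_eq_bot_of_disjoint (fun A B => (hN (c k)).1.eq_bot_or_eq_bot_of_isCompl)
    hdisj with h | h
  · exact hcj (Submodule.span_singleton_eq_bot.mp h)
  · exact hc k (Submodule.span_singleton_eq_bot.mp h)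

def IsLocalGenerator {R : Type*} [CommRing R] (J : Ideal R) (p : R × MaximalSpectrum R) : Prop :=
  p.1 ∈ J ∧
    J.map (algebraMap R (Localization.AtPrime p.2.asIdeal)) =
      Ideal.span {algebraMap R (Localization.AtPrime p.2.asIdeal) p.1} ∧
    J.map (algebraMap R (Localization.AtPrime p.2.asIdeal)) ≠ ⊥

def IsLocallySmall {R : Type*} [CommRing R] (J : Ideal R) (p q : R × MaximalSpectrum R) :
    Prop :=
  algebraMap R (Localization.AtPrime q.2.asIdeal) p.1 ∈
    (q.2.asIdeal * J).map (algebraMap R (Localization.AtPrime q.2.asIdeal))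

namespace IsArithmeticalRing

variable {R : Type u} [CommRing R]

theorem colon_sup_colon_eq_top (harith : IsArithmeticalRing R) {L : Ideal R} {a b : R}
    (h : Ideal.span {a} ⊓ Ideal.span {b} ≤ L) : L.colon {a} ⊔ L.colon {b} = ⊤ := by
  by_contra hne
  obtain ⟨Q, hQ, hle⟩ := Ideal.exists_le_maximal _ hne
  let φ := algebraMap R (Localization.AtPrime Q)
  have hnot_mem : ∀ c, L.colon {c} ≤ Q → φ c ∉ L.map φ := by
    intro c hc hmem
    obtain ⟨s, hs, hsc⟩ :=
      (IsLocalization.algebraMap_mem_map_algebraMap_iff Q.primeCompl _ _ _).mp hmem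
    exact hs (hc (Submodule.mem_colon_singleton.mpr hsc))
  have hinf : (Ideal.span {a}).map φ ⊓ (Ideal.span {b}).map φ ≤ L.map φ := by
    rw [← IsLocalization.map_inf Q.primeCompl]
    exact Ideal.map_mono h
  have hmem : ∀ c, φ c ∈ (Ideal.span {c}).map φ :=
    fun c => Ideal.mem_map_of_mem _ (Ideal.mem_span_singleton_self c)
  rcases harith Q ((Ideal.span {a}).map φ) ((Ideal.span {b}).map φ) with hab | hba
  · exact hnot_mem a (le_sup_left.trans hle) (hinf ⟨hmem a, hab (hmem a)⟩)
  · exact hnot_mem b (le_sup_right.trans hle) (hinf ⟨hba (hmem b), hmem b⟩)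

theorem map_le_map_mul_of_not_le (harith : IsArithmeticalRing R) (P : Ideal R) [P.IsMaximal]
    {I J : Ideal R} {y : R}
    (hy : J.map (algebraMap R (Localization.AtPrime P)) =
      Ideal.span {algebraMap R (Localization.AtPrime P) y})
    (h : ¬ J.map (algebraMap R (Localization.AtPrime P)) ≤
      I.map (algebraMap R (Localization.AtPrime P))) :
    I.map (algebraMap R (Localization.AtPrime P)) ≤
      (P * J).map (algebraMap R (Localization.AtPrime P)) := by
  have hlt := ((harith P _ _).resolve_right h).lt_of_not_ge h
  rw [Ideal.map_mul, Localization.AtPrime.map_eq_maximalIdeal, hy]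
  exact IsLocalRing.le_maximalIdeal_mul_of_lt_span_singleton (hy ▸ hlt)

theorem exists_isLocalGenerator (harith : IsArithmeticalRing R) {J : Ideal R} (hJ : ¬ J.FG)
    (hloc : ∀ (P : Ideal R) [P.IsMaximal], (J.map (algebraMap R (Localization.AtPrime P))).FG)
    (s : Finset (R × MaximalSpectrum R)) (hs : ∀ p ∈ s, IsLocalGenerator J p) :
    ∃ q, IsLocalGenerator J q ∧ ∀ p ∈ s, IsLocallySmall J p q ∧ IsLocallySmall J q p := by
  classical
  let D := Ideal.span (Prod.fst '' (s : Set (R × MaximalSpectrum R)))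
  have hDJ : D ≤ J := Ideal.span_le.mpr fun _ ⟨p, hp, hpy⟩ => hpy ▸ (hs p hp).1
  obtain ⟨P, hP, hDP⟩ : ∃ (P : Ideal R) (_ : P.IsMaximal),
      D.map (algebraMap R (Localization.AtPrime P)) ≠
        J.map (algebraMap R (Localization.AtPrime P)) := by
    by_contra! h
    exact hJ (Ideal.eq_of_localization_maximal h ▸ Submodule.fg_span (s.finite_toSet.image _))
  let φ := algebraMap R (Localization.AtPrime P)
  have hJD : ¬ J.map φ ≤ D.map φ := fun h => hDP (le_antisymm (Ideal.map_mono hDJ) h)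
  obtain ⟨g, hgJ, hg⟩ := IsLocalization.exists_mem_map_eq_span_singleton P.primeCompl
    (Ideal.isPrincipal_of_fg_of_total (harith P) (hloc P))
  have hnot_le : ∀ p ∈ s, ¬ p.2.asIdeal ≤ P := by
    intro p hp hle
    obtain rfl : p.2.asIdeal = P := p.2.isMaximal.eq_of_le hP.ne_top hle
    refine hJD ((hs p hp).2.1 ▸ (Ideal.span_singleton_le_iff_mem _).mpr ?_)
    exact Ideal.mem_map_of_mem _ (Ideal.subset_span ⟨p, hp, rfl⟩)
  choose! t htp htP using fun p hp => SetLike.not_le_iff_exists.mp (hnot_le p hp)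
  have hprod : ∏ p ∈ s, t p ∉ P := fun h => by
    obtain ⟨p, hp, htp'⟩ := Ideal.IsPrime.prod_mem_iff.mp h
    exact htP p hp htp'
  have hy : J.map φ = Ideal.span {φ ((∏ p ∈ s, t p) * g)} := by
    rw [hg, map_mul, Ideal.span_singleton_mul_left_unit
      (IsLocalization.map_units _ (⟨_, hprod⟩ : P.primeCompl))]
  refine ⟨((∏ p ∈ s, t p) * g, ⟨P, hP⟩),
    ⟨J.mul_mem_left _ hgJ, hy, fun h => hJD (h ▸ bot_le)⟩, fun p hp => ⟨?_, ?_⟩⟩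
  · exact harith.map_le_map_mul_of_not_le P hy hJD
      (Ideal.mem_map_of_mem _ (Ideal.subset_span ⟨p, hp, rfl⟩))
  · refine Ideal.mem_map_of_mem _ (Ideal.mul_mem_mul ?_ hgJ)
    exact Ideal.mem_of_dvd _ (Finset.dvd_prod_of_mem t hp) (htp p hp)

theorem exists_seq_notMem_span_of_not_fg (harith : IsArithmeticalRing R) {J : Ideal R}
    (hJ : ¬ J.FG)
    (hloc : ∀ (P : Ideal R) [P.IsMaximal], (J.map (algebraMap R (Localization.AtPrime P))).FG) :
    ∃ y : ℕ → R, ∀ k, y k ∉ Ideal.span (y '' {k}ᶜ) := by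
  obtain ⟨f, hgen, hsmall⟩ := exists_seq_of_forall_finset_exists (IsLocalGenerator J)
    (fun p q => IsLocallySmall J p q ∧ IsLocallySmall J q p)
    (exists_isLocalGenerator harith hJ hloc)
  let y k := (f k).1
  refine ⟨y, fun k hk => ?_⟩
  obtain ⟨-, hk_gen, hk_ne⟩ := hgen k
  let P := (f k).2.asIdeal
  have hothers : (Ideal.span (y '' {k}ᶜ)).map (algebraMap R (Localization.AtPrime P)) ≤
      (P * J).map (algebraMap R (Localization.AtPrime P)) := by
    rw [Ideal.map_span, Ideal.span_le]
    rintro _ ⟨_, ⟨i, hik, rfl⟩, rfl⟩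
    rcases lt_or_gt_of_ne hik with h | h
    · exact (hsmall i k h).1
    · exact (hsmall k i h).2
  refine hk_ne (Ideal.map_eq_bot_of_map_le_map_mul P (hloc P) ?_)
  rw [hk_gen, Ideal.span_singleton_le_iff_mem]
  exact hothers (Ideal.mem_map_of_mem _ hk)

theorem exists_mem_span_image_compl (harith : IsArithmeticalRing R)
    (hgoldie : ∀ L : Ideal R, HasFiniteGoldieDimension R (R ⧸ L)) (y : ℕ → R) :
    ∃ k, y k ∈ Ideal.span (y '' {k}ᶜ) := by
  by_contra! hy
  let L := ⨆ (j) (k) (_ : j ≠ k), Ideal.span {y j} ⊓ Ideal.span {y k}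
  have hL : ∀ j k, j ≠ k → Ideal.span {y j} ⊓ Ideal.span {y k} ≤ L := fun j k h =>
    le_iSup₂_of_le j k (le_iSup_of_le h le_rfl)
  have hLk : ∀ k, L ≤ Ideal.span (y '' {k}ᶜ) := fun k => by
    refine iSup₂_le fun i j => iSup_le fun hij => ?_
    by_cases hik : i = k
    · subst hik
      exact inf_le_right.trans
        (Ideal.span_mono (Set.singleton_subset_iff.mpr ⟨j, Ne.symm hij, rfl⟩))
    · exact inf_le_left.trans (Ideal.span_mono (Set.singleton_subset_iff.mpr ⟨i, hik, rfl⟩))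
  refine (hgoldie L).not_pairwise_torsionOf_sup_eq_top (fun k => Ideal.Quotient.mk L (y k))
    (fun k h => hy k (hLk k (Ideal.Quotient.eq_zero_iff_mem.mp h))) fun j k hjk => ?_
  dsimp only
  rw [Ideal.torsionOf_quotient_mk, Ideal.torsionOf_quotient_mk]
  exact harith.colon_sup_colon_eq_top (hL j k hjk)

theorem fg_of_forall_fg_map (harith : IsArithmeticalRing R)
    (hgoldie : ∀ L : Ideal R, HasFiniteGoldieDimension R (R ⧸ L)) {J : Ideal R}
    (hloc : ∀ (P : Ideal R) [P.IsMaximal], (J.map (algebraMap R (Localization.AtPrime P))).FG) :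
    J.FG := by
  by_contra hJ
  obtain ⟨y, hy⟩ := exists_seq_notMem_span_of_not_fg harith hJ hloc
  obtain ⟨k, hk⟩ := exists_mem_span_image_compl harith hgoldie y
  exact hy k hk

end IsArithmeticalRing

/-- Let `R` be an arithmetical ring such that every finitely generated `R`-module has
finite Goldie dimension and `R_P` is coherent for every maximal ideal `P`. Then `R` is
coherent. -/
theorem arithmetical_coherent_of_localizations_coherent (R : Type u) [CommRing R]
    (harith : IsArithmeticalRing R)
    (hb : ∀ M : ModuleCat.{u} R, Module.Finite R M → HasFiniteGoldieDimension R M)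
    (hloc : ∀ (P : Ideal R) [P.IsMaximal], IsCoherentRing (Localization.AtPrime P)) :
    IsCoherentRing R := by
  have hgoldie (L : Ideal R) : HasFiniteGoldieDimension R (R ⧸ L) :=
    hb (.of R (R ⧸ L)) (inferInstanceAs (Module.Finite R (R ⧸ L)))
  intro I hI
  induction I, hI using Submodule.fg_induction with
  | singleton x =>
    refine (Ideal.finitePresentation_span_singleton_iff x).mpr
      (harith.fg_of_forall_fg_map hgoldie fun P _ => ?_)
    rw [IsLocalization.map_torsionOf P.primeCompl, ← Ideal.finitePresentation_span_singleton_iff]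
    exact hloc P _ (Submodule.fg_span_singleton _)
  | sup I J _ _ =>
    refine Ideal.finitePresentation_sup (harith.fg_of_forall_fg_map hgoldie fun P _ => ?_)
    rw [IsLocalization.map_inf P.primeCompl]
    rcases harith P (Ideal.map (algebraMap R (Localization.AtPrime P)) I)
      (Ideal.map (algebraMap R (Localization.AtPrime P)) J) with h | h
    · rw [inf_eq_left.mpr h]
      exact Ideal.FG.map (Module.Finite.iff_fg.mp inferInstance) _
    · rw [inf_eq_right.mpr h]
      exact Ideal.FG.map (Module.Finite.iff_fg.mp inferInstance) _
end

section
/- Let R be an arithmetical ring such that every finitely generated R-module has finite Goldie dimension. Then for every ideal A of R, the set of minimal primes of the quotient ring R/A is finite. -/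
universe u

open CategoryTheory

section GoldieAux

variable {R : Type u} [CommRing R]

/-- Zorn: a submodule maximal among those containing `B` and meeting `A` trivially. -/
lemma exists_maximal_inf_bot {E : Type u} [AddCommGroup E] [Module R E]
    (A B : Submodule R E) (h : B ⊓ A = ⊥) :
    ∃ C, B ≤ C ∧ Maximal (fun C : Submodule R E => C ⊓ A = ⊥) C := by
  apply zorn_le_nonempty₀ {C : Submodule R E | C ⊓ A = ⊥} ?_ B h
  intro c hc hchain y hy
  refine ⟨sSup c, ?_, fun z hz => le_sSup hz⟩
  show sSup c ⊓ A = ⊥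
  rw [eq_bot_iff]
  intro x hx
  obtain ⟨hx1, hx2⟩ := Submodule.mem_inf.mp hx
  obtain ⟨z, hzc, hxz⟩ := (Submodule.mem_sSup_of_directed ⟨y, hy⟩ hchain.directedOn).mp hx1
  exact (eq_bot_iff.mp (hc hzc)) (Submodule.mem_inf.mpr ⟨hxz, hx2⟩)

/-- An indecomposable injective module is uniform. -/
lemma uniform_of_indecomposable_injective (N : Type u) [AddCommGroup N] [Module R N]
    (hinj : Module.Injective R N)
    (hind : ∀ C D : Submodule R N, C ⊓ D = ⊥ → C ⊔ D = ⊤ → C = ⊥ ∨ D = ⊥)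
    (A B : Submodule R N) (hAB : A ⊓ B = ⊥) : A = ⊥ ∨ B = ⊥ := by
  by_cases hB : B = ⊥
  · exact Or.inr hB
  left
  obtain ⟨C, hBC, hCmax⟩ := exists_maximal_inf_bot A B (by rwa [inf_comm] at hAB)
  obtain ⟨D, -, hDmax⟩ := exists_maximal_inf_bot C ⊥ (by simp)
  have hCD : C ⊓ D = ⊥ := by rw [inf_comm]; exact hDmax.1
  -- build the projection via injectivity
  have hfinj : Function.Injective (LinearMap.coprod C.subtype D.subtype) := by
    rw [← LinearMap.ker_eq_bot, eq_bot_iff]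
    rintro ⟨c, d⟩ hcd
    have h0 : (c : N) + (d : N) = 0 := hcd
    have hc : (c : N) ∈ C ⊓ D := by
      refine Submodule.mem_inf.mpr ⟨c.2, ?_⟩
      have : (c : N) = -(d : N) := eq_neg_of_add_eq_zero_left h0
      rw [this]; exact neg_mem d.2
    rw [hCD, Submodule.mem_bot] at hc
    have hd : (d : N) = 0 := by rw [hc, zero_add] at h0; exact h0
    refine Submodule.mem_bot _ |>.mpr ?_
    ext <;> simp [hc, hd]
  obtain ⟨p, hp⟩ := hinj.out (LinearMap.coprod C.subtype D.subtype) hfinj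
    (C.subtype.comp (LinearMap.fst R C D))
  have hpC : ∀ x ∈ C, p x = x := by
    intro x hx
    have := hp (⟨x, hx⟩, 0)
    simpa using this
  have hpD : ∀ x ∈ D, p x = 0 := by
    intro x hx
    have := hp (0, ⟨x, hx⟩)
    simpa using this
  -- ker p = D
  have hDker : D ≤ LinearMap.ker p := fun x hx => LinearMap.mem_ker.mpr (hpD x hx)
  have hkerC : LinearMap.ker p ⊓ C = ⊥ := by
    rw [eq_bot_iff]
    intro x hx
    obtain ⟨hx1, hx2⟩ := Submodule.mem_inf.mp hx
    have := hpC x hx2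
    rw [LinearMap.mem_ker.mp hx1] at this
    simp [← this]
  have hker : LinearMap.ker p = D := le_antisymm (hDmax.2 hkerC hDker) hDker
  -- range p ⊓ A = ⊥
  have hrangeA : LinearMap.range p ⊓ A = ⊥ := by
    rw [eq_bot_iff]
    intro y hy
    obtain ⟨hy1, hy2⟩ := Submodule.mem_inf.mp hy
    obtain ⟨x, rfl⟩ := hy1
    rw [Submodule.mem_bot]
    by_contra hne
    have hxD : x ∉ D := by
      intro hxD
      exact hne (hpD x hxD)
    -- maximality of D : (D ⊔ span x) ⊓ C ≠ ⊥
    have hne2 : ¬((D ⊔ Submodule.span R {x}) ⊓ C = ⊥) := by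
      intro heq
      have : D ⊔ Submodule.span R {x} ≤ D := hDmax.2 heq le_sup_left
      exact hxD (this (le_sup_right (α := Submodule R N)
        (Submodule.mem_span_singleton_self x)))
    obtain ⟨cz, hcz, hczne⟩ := (Submodule.ne_bot_iff _).mp hne2
    obtain ⟨hcz1, hcz2⟩ := Submodule.mem_inf.mp hcz
    obtain ⟨d, hd, z, hz, hdz⟩ := Submodule.mem_sup.mp hcz1
    obtain ⟨r, rfl⟩ := Submodule.mem_span_singleton.mp hz
    -- apply p : cz = r • p x
    have hpcz : p cz = cz := hpC cz hcz2
    have : cz = r • p x := by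
      rw [← hpcz, ← hdz, map_add, hpD d hd, zero_add, map_smul]
    have hmem : cz ∈ C ⊓ A := Submodule.mem_inf.mpr ⟨hcz2, by
      rw [this]; exact Submodule.smul_mem _ _ hy2⟩
    rw [hCmax.1] at hmem
    exact hczne (Submodule.mem_bot _ |>.mp hmem)
  -- range p = C
  have hCrange : C ≤ LinearMap.range p := fun x hx => ⟨x, hpC x hx⟩
  have hrange : LinearMap.range p = C := le_antisymm (hCmax.2 hrangeA hCrange) hCrange
  -- N = C ⊔ D
  have hsup : C ⊔ D = ⊤ := by
    rw [eq_top_iff]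
    intro x _
    have hpx : p x ∈ C := hrange ▸ LinearMap.mem_range_self p x
    have h1 : x - p x ∈ D := by
      rw [← hker, LinearMap.mem_ker, map_sub, hpC (p x) hpx, sub_self]
    have : x = p x + (x - p x) := by abel
    rw [this]
    exact Submodule.add_mem_sup hpx h1
  rcases hind C D hCD hsup with hC | hD
  · exact absurd (eq_bot_iff.mpr (hC ▸ hBC)) hB
  · rw [hD, sup_bot_eq] at hsup
    rw [eq_bot_iff, ← hCmax.1]
    exact le_inf (by rw [hsup]; exact le_top) le_rfl

/-- Notion of "uniform submodule" phrased on the ambient module. -/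
def IsUniformSub {E : Type u} [AddCommGroup E] [Module R E] (N : Submodule R E) : Prop :=
  ∀ A B : Submodule R E, A ≤ N → B ≤ N → A ⊓ B = ⊥ → A = ⊥ ∨ B = ⊥

lemma isUniformSub_of_indec_inj {E : Type u} [AddCommGroup E] [Module R E] {N : Submodule R E}
    (hinj : Module.Injective R ↥N) (hindec : IsIndecomposableSubmodule N) :
    IsUniformSub N := by
  intro A B hA hB hAB
  have hind : ∀ C D : Submodule R ↥N, C ⊓ D = ⊥ → C ⊔ D = ⊤ → C = ⊥ ∨ D = ⊥ := by
    intro C D hCD hCDt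
    have hsubinj : Function.Injective N.subtype := N.injective_subtype
    have h1 : (C.map N.subtype) ⊓ (D.map N.subtype) = ⊥ := by
      rw [← Submodule.map_inf _ hsubinj, hCD, Submodule.map_bot]
    have h2 : (C.map N.subtype) ⊔ (D.map N.subtype) = N := by
      rw [← Submodule.map_sup, hCDt, Submodule.map_top, Submodule.range_subtype]
    have hbot : ∀ X : Submodule R ↥N, X.map N.subtype = ⊥ → X = ⊥ := by
      intro X hX
      rw [eq_bot_iff]
      intro x hx
      have : (x : E) ∈ X.map N.subtype := ⟨x, hx, rfl⟩
      rw [hX, Submodule.mem_bot] at this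
      exact Submodule.mem_bot _ |>.mpr (Subtype.ext this)
    rcases hindec.2 _ _ (Submodule.map_subtype_le N C) (Submodule.map_subtype_le N D) h1 h2
      with h | h
    · exact Or.inl (hbot _ h)
    · exact Or.inr (hbot _ h)
  have key := uniform_of_indecomposable_injective ↥N hinj hind
    (A.comap N.subtype) (B.comap N.subtype) ?_
  · rcases key with h | h
    · refine Or.inl (eq_bot_iff.mpr fun a ha => ?_)
      have : (⟨a, hA ha⟩ : ↥N) ∈ A.comap N.subtype := ha
      rw [h] at this
      simpa using Subtype.ext_iff.mp (Submodule.mem_bot _ |>.mp this)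
    · refine Or.inr (eq_bot_iff.mpr fun a ha => ?_)
      have : (⟨a, hB ha⟩ : ↥N) ∈ B.comap N.subtype := ha
      rw [h] at this
      simpa using Subtype.ext_iff.mp (Submodule.mem_bot _ |>.mp this)
  · rw [eq_bot_iff]
    rintro ⟨x, hxN⟩ hx
    obtain ⟨hx1, hx2⟩ := Submodule.mem_inf.mp hx
    have : x ∈ A ⊓ B := Submodule.mem_inf.mpr ⟨hx1, hx2⟩
    rw [hAB, Submodule.mem_bot] at this
    exact Submodule.mem_bot _ |>.mpr (Subtype.ext this)

/-- Elementwise essentiality of `B` in `T`. -/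
def EssIn {E : Type u} [AddCommGroup E] [Module R E] (B T : Submodule R E) : Prop :=
  ∀ x ∈ T, x ≠ 0 → ∃ r : R, r • x ∈ B ∧ r • x ≠ 0

lemma essIn_of_uniform {E : Type u} [AddCommGroup E] [Module R E] {B N : Submodule R E}
    (hu : IsUniformSub N) (hBN : B ⊓ N ≠ ⊥) : EssIn (B ⊓ N) N := by
  intro x hx hx0
  have hspan : Submodule.span R {x} ≤ N := by
    rw [Submodule.span_le, Set.singleton_subset_iff]; exact hx
  have h1 : ¬((B ⊓ N) ⊓ Submodule.span R {x} = ⊥) := by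
    intro h
    rcases hu _ _ inf_le_right hspan h with h' | h'
    · exact hBN h'
    · exact hx0 (Submodule.span_singleton_eq_bot.mp h')
  obtain ⟨z, hz, hz0⟩ := (Submodule.ne_bot_iff _).mp h1
  obtain ⟨hz1, hz2⟩ := Submodule.mem_inf.mp hz
  obtain ⟨r, rfl⟩ := Submodule.mem_span_singleton.mp hz2
  exact ⟨r, hz1, hz0⟩

lemma essIn_iSup {E : Type u} [AddCommGroup E] [Module R E] :
    ∀ (n : ℕ) (N : Fin n → Submodule R E) (B : Submodule R E),
      iSupIndep N → (∀ i, EssIn (B ⊓ N i) (N i)) → EssIn B (⨆ i, N i) := by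
  intro n
  induction n with
  | zero =>
    intro N B _ _ x hx hx0
    rw [iSup_of_empty] at hx
    exact absurd (Submodule.mem_bot _ |>.mp hx) hx0
  | succ m ih =>
    intro N B hind hess x hx hx0
    have hsplit : (⨆ i, N i) = N 0 ⊔ ⨆ i : Fin m, N i.succ := by
      apply le_antisymm
      · apply iSup_le
        intro i
        rcases Fin.eq_zero_or_eq_succ i with rfl | ⟨j, rfl⟩
        · exact le_sup_left
        · exact le_sup_of_le_right (le_iSup (fun i : Fin m => N i.succ) j)
      · exact sup_le (le_iSup N 0) (iSup_le fun i => le_iSup N i.succ)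
    rw [hsplit] at hx
    obtain ⟨y, hy, z, hz, rfl⟩ := Submodule.mem_sup.mp hx
    have hdisj : N 0 ⊓ (⨆ i : Fin m, N i.succ) = ⊥ := by
      have h1 := (hind 0).eq_bot
      rw [eq_bot_iff, ← h1]
      refine le_inf inf_le_left (le_trans inf_le_right ?_)
      exact iSup_le fun i => le_iSup_of_le i.succ (le_iSup_of_le (Fin.succ_ne_zero i) le_rfl)
    by_cases hy0 : y = 0
    · subst hy0
      rw [zero_add] at hx0 ⊢
      exact ih (fun i => N i.succ) B (hind.comp (Fin.succ_injective m)) (fun i => hess i.succ)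
        z hz hx0
    · obtain ⟨r, hr1, hr2⟩ := hess 0 y hy hy0
      obtain ⟨hrB, -⟩ := Submodule.mem_inf.mp hr1
      by_cases hrz : r • z = 0
      · refine ⟨r, ?_, ?_⟩
        · rw [smul_add, hrz, add_zero]; exact hrB
        · rw [smul_add, hrz, add_zero]; exact hr2
      · obtain ⟨s, hs1, hs2⟩ := ih (fun i => N i.succ) B (hind.comp (Fin.succ_injective m))
          (fun i => hess i.succ) (r • z) (Submodule.smul_mem _ _ hz) hrz
        refine ⟨s * r, ?_, ?_⟩
        · simp only [smul_add, mul_smul]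
          exact Submodule.add_mem _ (Submodule.smul_mem _ _ hrB) hs1
        · simp only [smul_add, mul_smul]
          intro h0
          have hmem : s • r • z ∈ N 0 ⊓ (⨆ i : Fin m, N i.succ) := by
            refine Submodule.mem_inf.mpr ⟨?_, ?_⟩
            · have : s • r • z = -(s • r • y) := by
                rw [eq_neg_iff_add_eq_zero, add_comm]; exact h0
              rw [this]
              exact neg_mem (Submodule.smul_mem _ _ (Submodule.smul_mem _ _ hy))
            · exact Submodule.smul_mem _ _ (Submodule.smul_mem _ _ hz)
          rw [hdisj, Submodule.mem_bot] at hmem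
          exact hs2 hmem

lemma goldie_count :
    ∀ (n : ℕ) (E : Type u) [AddCommGroup E] [Module R E]
      (N : Fin n → Submodule R E), iSupIndep N → (⨆ i, N i) = ⊤ →
      (∀ i, IsUniformSub (N i)) →
      ∀ A : Fin (n + 1) → Submodule R E, iSupIndep A → (∀ j, A j ≠ ⊥) → False := by
  intro n
  induction n with
  | zero =>
    intro E _ _ N _ hsup _ A _ hA
    have hbot : (⊤ : Submodule R E) = ⊥ := by rw [← hsup, iSup_of_empty]
    exact hA 0 (eq_bot_iff.mpr (by rw [← hbot]; exact le_top))
  | succ m ih =>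
    intro E _ _ N hNind hNsup hNunif A hAind hA0
    classical
    set B : Submodule R E := ⨆ j : Fin (m + 1), A j.succ with hBdef
    have hBA0 : B ⊓ A 0 = ⊥ := by
      have h1 := (hAind 0).eq_bot
      rw [eq_bot_iff, ← h1]
      refine le_inf inf_le_right (le_trans inf_le_left ?_)
      exact iSup_le fun j => le_iSup_of_le j.succ (le_iSup_of_le (Fin.succ_ne_zero j) le_rfl)
    have hex : ∃ i, B ⊓ N i = ⊥ := by
      by_contra hno
      push_neg at hno
      have hess : ∀ i, EssIn (B ⊓ N i) (N i) := fun i => essIn_of_uniform (hNunif i) (hno i)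
      have hBE : EssIn B (⊤ : Submodule R E) := by
        have h2 := essIn_iSup (m + 1) N B hNind hess
        rwa [hNsup] at h2
      obtain ⟨x, hx, hx0⟩ := (Submodule.ne_bot_iff _).mp (hA0 0)
      obtain ⟨r, hr1, hr2⟩ := hBE x trivial hx0
      have hmem : r • x ∈ B ⊓ A 0 := Submodule.mem_inf.mpr ⟨hr1, Submodule.smul_mem _ _ hx⟩
      rw [hBA0, Submodule.mem_bot] at hmem
      exact hr2 hmem
    obtain ⟨i, hBNi⟩ := hex
    set q := (N i).mkQ with hqdef
    have hker : LinearMap.ker q = N i := Submodule.ker_mkQ (N i)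
    have hq0 : ∀ (S : Submodule R E), N i ⊓ S = ⊥ → ∀ x ∈ S, q x = 0 → x = 0 := by
      intro S hS x hx hqx
      have hmem : x ∈ N i ⊓ S :=
        Submodule.mem_inf.mpr ⟨by rw [← hker]; exact LinearMap.mem_ker.mpr hqx, hx⟩
      rw [hS, Submodule.mem_bot] at hmem
      exact hmem
    have hmapbot : ∀ (S X : Submodule R E), X ≤ S → N i ⊓ S = ⊥ → X.map q = ⊥ → X = ⊥ := by
      intro S X hXS hS hmap
      rw [eq_bot_iff]
      intro x hx
      have : q x ∈ X.map q := ⟨x, hx, rfl⟩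
      rw [hmap, Submodule.mem_bot] at this
      exact Submodule.mem_bot _ |>.mpr (hq0 S hS x (hXS hx) this)
    have hmapinf : ∀ (S X Y : Submodule R E), X ≤ S → Y ≤ S → N i ⊓ S = ⊥ →
        (X.map q) ⊓ (Y.map q) ≤ (X ⊓ Y).map q := by
      intro S X Y hXS hYS hS z hz
      obtain ⟨hz1, hz2⟩ := Submodule.mem_inf.mp hz
      obtain ⟨x, hxX, rfl⟩ := hz1
      obtain ⟨y, hyY, hqy⟩ := hz2
      have hxy : x - y = 0 := by
        refine hq0 S hS _ (Submodule.sub_mem _ (hXS hxX) (hYS hyY)) ?_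
        rw [map_sub, hqy, sub_self]
      have hxe : x = y := by rwa [sub_eq_zero] at hxy
      exact ⟨x, Submodule.mem_inf.mpr ⟨hxX, hxe ▸ hyY⟩, rfl⟩
    -- the quotiented uniform family
    set S0 : Submodule R E := ⨆ j, ⨆ _ : j ≠ i, N j with hS0def
    have hS0 : N i ⊓ S0 = ⊥ := (hNind i).eq_bot
    have hNsub : ∀ k : Fin m, N (i.succAbove k) ≤ S0 := fun k =>
      le_iSup_of_le (i.succAbove k) (le_iSup_of_le (Fin.succAbove_ne i k) le_rfl)
    set N' : Fin m → Submodule R (E ⧸ N i) := fun k => (N (i.succAbove k)).map q with hN'def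
    have hmapsup : ∀ (f : Fin m → Submodule R E) (k : Fin m),
        (⨆ l, ⨆ _ : l ≠ k, f l).map q = ⨆ l, ⨆ _ : l ≠ k, (f l).map q := by
      intro f k
      rw [Submodule.map_iSup]
      exact iSup_congr fun l => Submodule.map_iSup q _
    have hNind' : iSupIndep N' := by
      intro k
      rw [disjoint_iff]
      have hY : (⨆ l, ⨆ _ : l ≠ k, N (i.succAbove l)) ≤ S0 :=
        iSup_le fun l => iSup_le fun _ => hNsub l
      have hXY : N (i.succAbove k) ⊓ (⨆ l, ⨆ _ : l ≠ k, N (i.succAbove l)) = ⊥ := by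
        rw [eq_bot_iff, ← (hNind (i.succAbove k)).eq_bot]
        refine le_inf inf_le_left (le_trans inf_le_right ?_)
        exact iSup_le fun l => iSup_le fun hl =>
          le_iSup_of_le (i.succAbove l)
            (le_iSup_of_le (fun h => hl (Fin.succAbove_right_injective h)) le_rfl)
      have heq : (⨆ l, ⨆ _ : l ≠ k, N' l) = (⨆ l, ⨆ _ : l ≠ k, N (i.succAbove l)).map q := by
        rw [hmapsup]
      rw [eq_bot_iff, heq]
      refine le_trans (hmapinf S0 _ _ (hNsub k) hY hS0) ?_
      rw [hXY, Submodule.map_bot]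
    have hNibot : (N i).map q = ⊥ := by
      rw [eq_bot_iff]
      rintro z ⟨x, hx, rfl⟩
      refine Submodule.mem_bot _ |>.mpr ?_
      exact LinearMap.mem_ker.mp (by rw [hker]; exact hx)
    have hNsup' : (⨆ k, N' k) = ⊤ := by
      have h1 : (⨆ j, N j).map q = ⊤ := by
        rw [hNsup, Submodule.map_top, Submodule.range_mkQ]
      rw [Submodule.map_iSup] at h1
      rw [← h1]
      apply le_antisymm
      · exact iSup_le fun k => le_iSup (fun j => (N j).map q) (i.succAbove k)
      · apply iSup_le
        intro j
        by_cases hj : j = i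
        · subst hj
          rw [hNibot]
          exact bot_le
        · obtain ⟨k, hk⟩ := Fin.exists_succAbove_eq hj
          have h2 : (N j).map q = (N (i.succAbove k)).map q := by rw [hk]
          rw [h2]
          exact le_iSup N' k
    have hNunif' : ∀ k, IsUniformSub (N' k) := by
      intro k A₂ B₂ hA₂ hB₂ hAB₂
      have hkinf : N i ⊓ N (i.succAbove k) = ⊥ := by
        rw [eq_bot_iff, ← hS0]
        exact le_inf inf_le_left (le_trans inf_le_right (hNsub k))
      set X := (A₂.comap q) ⊓ N (i.succAbove k) with hXdef
      set Y := (B₂.comap q) ⊓ N (i.succAbove k) with hYdef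
      have hXA : X.map q = A₂ := by
        apply le_antisymm
        · rintro z ⟨x, hx, rfl⟩
          exact hx.1
        · intro a ha
          obtain ⟨x, hxN, hxa⟩ := hA₂ ha
          exact ⟨x, Submodule.mem_inf.mpr ⟨by show q x ∈ A₂; rw [hxa]; exact ha, hxN⟩, hxa⟩
      have hXB : Y.map q = B₂ := by
        apply le_antisymm
        · rintro z ⟨x, hx, rfl⟩
          exact hx.1
        · intro a ha
          obtain ⟨x, hxN, hxa⟩ := hB₂ ha
          exact ⟨x, Submodule.mem_inf.mpr ⟨by show q x ∈ B₂; rw [hxa]; exact ha, hxN⟩, hxa⟩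
      have hXY : X ⊓ Y = ⊥ := by
        rw [eq_bot_iff]
        intro x hx
        obtain ⟨hx1, hx2⟩ := Submodule.mem_inf.mp hx
        have hqx : q x ∈ A₂ ⊓ B₂ := Submodule.mem_inf.mpr ⟨hx1.1, hx2.1⟩
        rw [hAB₂, Submodule.mem_bot] at hqx
        have : x ∈ N i ⊓ N (i.succAbove k) :=
          Submodule.mem_inf.mpr ⟨by rw [← hker]; exact LinearMap.mem_ker.mpr hqx, hx1.2⟩
        rw [hkinf] at this
        exact this
      rcases hNunif (i.succAbove k) X Y inf_le_right inf_le_right hXY with h | h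
      · left; rw [← hXA, h, Submodule.map_bot]
      · right; rw [← hXB, h, Submodule.map_bot]
    set A' : Fin (m + 1) → Submodule R (E ⧸ N i) := fun j => (A j.succ).map q with hA'def
    have hAsub : ∀ j : Fin (m + 1), A j.succ ≤ B := fun j =>
      le_iSup (fun j : Fin (m + 1) => A j.succ) j
    have hNiB : N i ⊓ B = ⊥ := by rw [inf_comm]; exact hBNi
    have hmapsup1 : ∀ (f : Fin (m + 1) → Submodule R E) (k : Fin (m + 1)),
        (⨆ l, ⨆ _ : l ≠ k, f l).map q = ⨆ l, ⨆ _ : l ≠ k, (f l).map q := by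
      intro f k
      rw [Submodule.map_iSup]
      exact iSup_congr fun l => Submodule.map_iSup q _
    have hAind' : iSupIndep A' := by
      intro j
      rw [disjoint_iff]
      have hY : (⨆ l, ⨆ _ : l ≠ j, A l.succ) ≤ B :=
        iSup_le fun l => iSup_le fun _ => hAsub l
      have hXY : A j.succ ⊓ (⨆ l, ⨆ _ : l ≠ j, A l.succ) = ⊥ := by
        rw [eq_bot_iff, ← (hAind j.succ).eq_bot]
        refine le_inf inf_le_left (le_trans inf_le_right ?_)
        exact iSup_le fun l => iSup_le fun hl =>
          le_iSup_of_le l.succ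
            (le_iSup_of_le (fun h : l.succ = j.succ => hl (Fin.succ_injective (m + 1) h)) le_rfl)
      have heq : (⨆ l, ⨆ _ : l ≠ j, A' l) = (⨆ l, ⨆ _ : l ≠ j, A l.succ).map q := by
        rw [hmapsup1]
      rw [eq_bot_iff, heq]
      refine le_trans (hmapinf B _ _ (hAsub j) hY hNiB) ?_
      rw [hXY, Submodule.map_bot]
    have hA0' : ∀ j, A' j ≠ ⊥ := by
      intro j hbot
      exact hA0 j.succ (hmapbot B _ (hAsub j) hNiB hbot)
    exact ih (E ⧸ N i) N' hNind' hNsup' hNunif' A' hAind' hA0'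

lemma exists_bound_of_goldie {M : Type u} [AddCommGroup M] [Module R M]
    (hM : HasFiniteGoldieDimension R M) :
    ∃ n : ℕ, ∀ A : Fin (n + 1) → Submodule R M, iSupIndep A → ¬(∀ j, A j ≠ ⊥) := by
  obtain ⟨E, f, n, N, ⟨hEinj, hfinj, hess⟩, hind, hsup, hN⟩ := hM
  refine ⟨n, fun A hAind hA0 => ?_⟩
  have hNunif : ∀ i, IsUniformSub (N i) := fun i =>
    isUniformSub_of_indec_inj (hN i).2 (hN i).1
  set A' : Fin (n + 1) → Submodule R E := fun j => (A j).map f with hA'def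
  have hA'ind : iSupIndep A' := by
    intro j
    rw [disjoint_iff]
    have heq : (⨆ l, ⨆ _ : l ≠ j, A' l) = (⨆ l, ⨆ _ : l ≠ j, A l).map f := by
      rw [Submodule.map_iSup]
      exact (iSup_congr fun l => Submodule.map_iSup f _).symm
    rw [heq, ← Submodule.map_inf f hfinj, (hAind j).eq_bot, Submodule.map_bot]
  have hA'0 : ∀ j, A' j ≠ ⊥ := by
    intro j hbot
    refine hA0 j (eq_bot_iff.mpr fun a ha => ?_)
    have hbot' : (A j).map f = ⊥ := hbot
    have : f a ∈ (A j).map f := ⟨a, ha, rfl⟩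
    rw [hbot', Submodule.mem_bot] at this
    have h0 : f a = f 0 := by rw [this, map_zero]
    exact Submodule.mem_bot _ |>.mpr (hfinj h0)
  exact goldie_count n E N hind hsup hNunif A' hA'ind hA'0

end GoldieAux

section RingAux

lemma minimal_prime_ann {T : Type u} [CommRing T] [IsReduced T] {p : Ideal T}
    (hp : p ∈ minimalPrimes T) {a : T} (ha : a ∈ p) : ∃ s : T, s ∉ p ∧ s * a = 0 := by
  have hprime : p.IsPrime := hp.1.1
  by_contra hno
  push_neg at hno
  set S : Submonoid T :=
    { carrier := {x | ∃ s, s ∉ p ∧ ∃ n : ℕ, x = s * a ^ n}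
      mul_mem' := by
        rintro x y ⟨s, hs, n, rfl⟩ ⟨t, ht, m, rfl⟩
        exact ⟨s * t, fun hmem => ((hprime.mem_or_mem hmem).elim hs ht), n + m, by ring⟩
      one_mem' := ⟨1, fun h => hprime.ne_top ((Ideal.eq_top_iff_one p).mpr h), 0, by ring⟩ }
    with hSdef
  have h0 : (0 : T) ∉ (S : Set T) := by
    rintro ⟨s, hs, n, hsn⟩
    rcases Nat.eq_zero_or_pos n with rfl | hn
    · rw [pow_zero, mul_one] at hsn
      exact hs (hsn ▸ p.zero_mem)
    · have hpow : (s * a) ^ n = 0 := by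
        have hsplit : s ^ n = s ^ (n - 1) * s := by
          rw [← pow_succ]
          congr 1
          omega
        rw [mul_pow, hsplit, mul_assoc, ← hsn, mul_zero]
      exact hno s hs (IsNilpotent.eq_zero ⟨n, hpow⟩)
  have hdisj : Disjoint ((⊥ : Ideal T) : Set T) (S : Set T) := by
    rw [Set.disjoint_left]
    intro x hx
    rw [SetLike.mem_coe, Submodule.mem_bot] at hx
    subst hx
    exact h0
  obtain ⟨q, hq, -, hqS⟩ := Ideal.exists_le_prime_disjoint ⊥ S hdisj
  have hqp : q ≤ p := by
    intro x hxq
    by_contra hxp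
    exact (Set.disjoint_left.mp hqS hxq) ⟨x, hxp, 0, by ring⟩
  have hpq : p ≤ q := hp.2 ⟨hq, bot_le⟩ hqp
  exact (Set.disjoint_left.mp hqS (hpq ha))
    ⟨1, fun h => hprime.ne_top ((Ideal.eq_top_iff_one p).mpr h), 1, by ring⟩

lemma exists_orthogonal (T : Type u) [CommRing T] [IsReduced T]
    (hinf : (minimalPrimes T).Infinite) :
    ∀ k : ℕ, ∃ v : Fin k → T, (∀ i, v i ≠ 0) ∧ (∀ i j, i ≠ j → v i * v j = 0) ∧
      {p | p ∈ minimalPrimes T ∧ ∃ y, y ∉ p ∧ ∀ i, y * v i = 0}.Infinite := by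
  intro k
  induction k with
  | zero =>
    refine ⟨Fin.elim0, fun i => i.elim0, fun i j _ => i.elim0, ?_⟩
    have heq : {p | p ∈ minimalPrimes T ∧ ∃ y, y ∉ p ∧ ∀ i : Fin 0, y * Fin.elim0 i = 0}
        = minimalPrimes T := by
      ext p
      simp only [Set.mem_setOf_eq, and_iff_left_iff_imp]
      intro hp
      exact ⟨1, fun h => hp.1.1.ne_top ((Ideal.eq_top_iff_one p).mpr h), fun i => i.elim0⟩
    rw [heq]
    exact hinf
  | succ m ih =>
    obtain ⟨v, hv0, hvorth, hZ⟩ := ih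
    set Z := {p | p ∈ minimalPrimes T ∧ ∃ y, y ∉ p ∧ ∀ i, y * v i = 0} with hZdef
    obtain ⟨p, hpZ, q, hqZ, hpq⟩ := hZ.nontrivial
    have hpmin : p ∈ minimalPrimes T := hpZ.1
    have hqmin : q ∈ minimalPrimes T := hqZ.1
    have hpprime : p.IsPrime := hpmin.1.1
    have hqprime : q.IsPrime := hqmin.1.1
    have hnple : ¬ p ≤ q := by
      intro hle
      exact hpq (le_antisymm hle (hqmin.2 ⟨hpprime, bot_le⟩ hle))
    obtain ⟨a, hap, haq⟩ := SetLike.not_le_iff_exists.mp hnple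
    have step : ∀ t : T, t ≠ 0 → (∀ i, t * v i = 0) →
        {r | r ∈ Z ∧ t ∈ r}.Infinite →
        ∃ w : Fin (m + 1) → T, (∀ i, w i ≠ 0) ∧ (∀ i j, i ≠ j → w i * w j = 0) ∧
          {p | p ∈ minimalPrimes T ∧ ∃ y, y ∉ p ∧ ∀ i, y * w i = 0}.Infinite := by
      intro t ht0 htv hZ'
      refine ⟨Fin.snoc v t, ?_, ?_, ?_⟩
      · intro i
        rcases Fin.eq_castSucc_or_eq_last i with ⟨i', rfl⟩ | rfl
        · rw [Fin.snoc_castSucc]; exact hv0 i'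
        · rw [Fin.snoc_last]; exact ht0
      · intro i j hij
        rcases Fin.eq_castSucc_or_eq_last i with ⟨i', rfl⟩ | rfl <;>
          rcases Fin.eq_castSucc_or_eq_last j with ⟨j', rfl⟩ | rfl
        · rw [Fin.snoc_castSucc, Fin.snoc_castSucc]
          exact hvorth i' j' (fun h => hij (by rw [h]))
        · rw [Fin.snoc_castSucc, Fin.snoc_last, mul_comm]
          exact htv i'
        · rw [Fin.snoc_castSucc, Fin.snoc_last]
          exact htv j'
        · exact absurd rfl hij
      · apply Set.Infinite.mono ?_ hZ'
        rintro r ⟨⟨hrmin, y, hy, hyv⟩, htr⟩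
        obtain ⟨s, hs, hst⟩ := minimal_prime_ann hrmin htr
        refine ⟨hrmin, y * s, fun hmem => (hrmin.1.1.mem_or_mem hmem).elim hy hs, ?_⟩
        intro i
        rcases Fin.eq_castSucc_or_eq_last i with ⟨i', rfl⟩ | rfl
        · rw [Fin.snoc_castSucc, mul_right_comm, hyv i', zero_mul]
        · rw [Fin.snoc_last, mul_assoc, hst, mul_zero]
    have hsplit : {r | r ∈ Z ∧ a ∉ r}.Infinite ∨ {r | r ∈ Z ∧ a ∈ r}.Infinite := by
      rw [← Set.infinite_union]
      have hsub : Z ⊆ {r | r ∈ Z ∧ a ∉ r} ∪ {r | r ∈ Z ∧ a ∈ r} := by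
        intro r hr
        by_cases h : a ∈ r
        · exact Or.inr ⟨hr, h⟩
        · exact Or.inl ⟨hr, h⟩
      exact Set.Infinite.mono hsub hZ
    obtain ⟨b, hbp, hba⟩ := minimal_prime_ann hpmin hap
    obtain ⟨yp, hyp, hypv⟩ := hpZ.2
    obtain ⟨yq, hyq, hyqv⟩ := hqZ.2
    rcases hsplit with hc1 | hc2
    · have htne : yp * b ∉ p := fun hmem => (hpprime.mem_or_mem hmem).elim hyp hbp
      refine step (yp * b) (fun h0 => htne (h0 ▸ p.zero_mem)) ?_ ?_
      · intro i
        rw [mul_right_comm, hypv i, zero_mul]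
      · apply Set.Infinite.mono ?_ hc1
        rintro r ⟨hrZ, har⟩
        refine ⟨hrZ, ?_⟩
        have hprod : (yp * b) * a = 0 := by rw [mul_assoc, hba, mul_zero]
        have hmem : (yp * b) * a ∈ r := hprod ▸ r.zero_mem
        exact (hrZ.1.1.1.mem_or_mem hmem).elim id (fun h => absurd h har)
    · have htne : yq * a ∉ q := fun hmem => (hqprime.mem_or_mem hmem).elim hyq haq
      refine step (yq * a) (fun h0 => htne (h0 ▸ q.zero_mem)) ?_ ?_
      · intro i
        rw [mul_right_comm, hyqv i, zero_mul]
      · apply Set.Infinite.mono ?_ hc2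
        rintro r ⟨hrZ, har⟩
        exact ⟨hrZ, Ideal.mul_mem_left r _ har⟩

end RingAux



/-- Let `R` be an arithmetical ring such that every finitely generated `R`-module has
finite Goldie dimension. Then for every ideal `A` of `R`, the set of minimal primes of
`R ⧸ A` is finite. -/
theorem arithmetical_minimalPrimes_quotient_finite (R : Type u) [CommRing R]
    (harith : IsArithmeticalRing R)
    (hb : ∀ M : ModuleCat.{u} R, Module.Finite R M → HasFiniteGoldieDimension R M)
    (A : Ideal R) :
    (minimalPrimes (R ⧸ A)).Finite := by
  by_contra hfin
  have hinfQ : (minimalPrimes (R ⧸ A)).Infinite := hfin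
  have hinfA : (Ideal.minimalPrimes A).Infinite := by
    rw [Ideal.minimalPrimes_eq_comap]
    exact (Set.infinite_image_iff
      ((Ideal.comap_injective_of_surjective _ Ideal.Quotient.mk_surjective).injOn)).mpr hinfQ
  have hinfT : (minimalPrimes (R ⧸ A.radical)).Infinite := by
    have h1 : (Ideal.minimalPrimes A.radical).Infinite := by
      rw [Ideal.radical_minimalPrimes]; exact hinfA
    rw [Ideal.minimalPrimes_eq_comap] at h1
    exact h1.of_image _
  have hred : IsReduced (R ⧸ A.radical) :=
    (Ideal.isRadical_iff_quotient_reduced _).mp A.radical_isRadical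
  have hfinmod : Module.Finite R (R ⧸ A.radical) :=
    Module.Finite.of_surjective (Ideal.Quotient.mkₐ R A.radical).toLinearMap
      (Ideal.Quotient.mkₐ_surjective R _)
  have hMG : HasFiniteGoldieDimension R (R ⧸ A.radical) :=
    hb (ModuleCat.of R (R ⧸ A.radical)) hfinmod
  obtain ⟨n, hn⟩ := exists_bound_of_goldie hMG
  obtain ⟨v, hv0, hvorth, -⟩ := exists_orthogonal (R ⧸ A.radical) hinfT (n + 1)
  refine hn (fun i => Submodule.span R {v i}) ?_ fun j h =>
    hv0 j (Submodule.span_singleton_eq_bot.mp h)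
  intro i
  rw [disjoint_iff, eq_bot_iff]
  intro x hx
  obtain ⟨hx1, hx2⟩ := Submodule.mem_inf.mp hx
  obtain ⟨r, rfl⟩ := Submodule.mem_span_singleton.mp hx1
  have hK : (⨆ l, ⨆ _ : l ≠ i, Submodule.span R {v l}) ≤
      LinearMap.ker (LinearMap.mulRight R (v i)) := by
    refine iSup_le fun l => iSup_le fun hl => ?_
    rw [Submodule.span_le, Set.singleton_subset_iff]
    exact LinearMap.mem_ker.mpr (by simpa using hvorth l i hl)
  have hx3 : (r • v i) * v i = 0 := by
    simpa using LinearMap.mem_ker.mp (hK hx2)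
  have hsq : (r • v i) * (r • v i) = 0 := by
    rw [mul_smul_comm, hx3, smul_zero]
  exact Submodule.mem_bot _ |>.mpr
    (IsNilpotent.eq_zero ⟨2, by rw [pow_two]; exact hsq⟩)
end

section
/- Let R be a Prüfer domain of finite character. For each maximal ideal P of R let T_(P) be a torsion R_P-module. Then the torsion submodule of the product ∏_{P ∈ Max R} T_(P) (regarded as an R-module) equals the direct sum ⊕_{P ∈ Max R} T_(P). -/
universe u

open CategoryTheory

/-- Let `R` be a Prüfer domain of finite character and, for each maximal ideal `P`, let
`T_(P)` be a torsion `R_P`-module. Then the torsion submodule of the product `∏ T_(P)`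
(as an `R`-module) is exactly the direct sum, i.e. the set of finitely supported
elements. -/
theorem prufer_finiteCharacter_torsion_of_prod (R : Type u) [CommRing R]
    [IsDomain R] (harith : IsArithmeticalRing R)
    (hfc : ∀ r : R, r ≠ 0 → {P : Ideal R | P.IsMaximal ∧ r ∈ P}.Finite)
    (T : MaximalSpectrum R → Type u)
    [∀ P, AddCommGroup (T P)] [∀ P, Module R (T P)]
    [∀ P : MaximalSpectrum R, Module (Localization.AtPrime P.asIdeal) (T P)]
    [∀ P : MaximalSpectrum R, IsScalarTower R (Localization.AtPrime P.asIdeal) (T P)]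
    (htor : ∀ P : MaximalSpectrum R, Module.IsTorsion (Localization.AtPrime P.asIdeal) (T P)) :
    (Submodule.torsion R (∀ P, T P) : Set (∀ P, T P)) =
      {x : ∀ P, T P | {P : MaximalSpectrum R | x P ≠ 0}.Finite} := by
  ext x
  simp only [SetLike.mem_coe, Set.mem_setOf_eq]
  classical
  constructor
  · rintro ⟨⟨r, hr⟩, hrx⟩
    have hr0 : r ≠ 0 := nonZeroDivisors.ne_zero hr
    refine Set.Finite.subset (Set.Finite.preimage (f := MaximalSpectrum.asIdeal)
      (fun a _ b _ h => MaximalSpectrum.ext h) (hfc r hr0)) ?_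
    intro P hP
    simp only [Set.mem_preimage, Set.mem_setOf_eq]
    refine ⟨P.2, ?_⟩
    by_contra hrP
    have hu : IsUnit (algebraMap R (Localization.AtPrime P.asIdeal) r) :=
      IsLocalization.map_units (Localization.AtPrime P.asIdeal) (⟨r, hrP⟩ : P.asIdeal.primeCompl)
    have h0 : (algebraMap R (Localization.AtPrime P.asIdeal) r) • x P = 0 := by
      rw [algebraMap_smul]
      have := congrFun hrx P
      simpa using this
    obtain ⟨c, hc⟩ := hu.exists_left_inv
    have hxP : x P = 0 := by
      calc x P = (c * algebraMap R (Localization.AtPrime P.asIdeal) r) • x P := by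
            rw [hc, one_smul]
        _ = c • (algebraMap R (Localization.AtPrime P.asIdeal) r) • x P := mul_smul _ _ _
        _ = 0 := by rw [h0, smul_zero]
    exact hP hxP
  · intro hx
    have hs : ∀ P : MaximalSpectrum R, ∃ a : R, a ≠ 0 ∧ a • x P = 0 := by
      intro P
      obtain ⟨⟨s, hsmem⟩, hsx⟩ := htor P (x := x P)
      obtain ⟨⟨a, u⟩, hau⟩ := IsLocalization.surj (M := P.asIdeal.primeCompl) s
      have ha0 : a ≠ 0 := by
        rintro rfl
        simp only [map_zero] at hau
        have hu : IsUnit (algebraMap R (Localization.AtPrime P.asIdeal) (u : R)) :=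
          IsLocalization.map_units (Localization.AtPrime P.asIdeal) u
        have hs0 : s = 0 := by
          rcases mul_eq_zero.mp hau with h | h
          · exact h
          · exact absurd h hu.ne_zero
        exact nonZeroDivisors.ne_zero hsmem hs0
      refine ⟨a, ha0, ?_⟩
      have : (algebraMap R (Localization.AtPrime P.asIdeal) a) • x P = 0 := by
        have hsx' : s • x P = 0 := hsx
        rw [← hau, mul_comm, mul_smul, algebraMap_smul, hsx', smul_zero]
      rwa [algebraMap_smul] at this
    choose a ha0 hax using hs
    set r : R := ∏ P ∈ hx.toFinset, a P with hr
    have hr0 : r ≠ 0 := Finset.prod_ne_zero_iff.mpr fun P _ => ha0 P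
    refine ⟨⟨r, mem_nonZeroDivisors_of_ne_zero hr0⟩, funext fun P => ?_⟩
    by_cases hxP : x P = 0
    · simp [hxP]
    · have hPmem : P ∈ hx.toFinset := by simpa using hxP
      have : r = (∏ Q ∈ hx.toFinset.erase P, a Q) * a P := by
        rw [mul_comm, hr, Finset.mul_prod_erase _ _ hPmem]
      show r • x P = 0
      rw [this, mul_smul, hax P, smul_zero]
end

section
/- Let R be a coherent domain and G an injective R-module. Let E = ∏_{P ∈ Max R} E_R(R/P) and F = Hom_R(Hom_R(G, E), E). Then F is an injective R-module and G is isomorphic to a direct summand of F. -/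
universe u

open CategoryTheory

/-!
`E` is an injective cogenerator: it is a product of injectives, and for `m ≠ 0` the annihilator
of `m` lies in a maximal ideal `P`, so `R ∙ m ≅ R ⧸ ann m → R ⧸ P → E(R/P)` extends to a map
`G → E` not killing `m`. Hence evaluation `G → F` is injective, and it splits since `G` is
injective.

`F` is injective because `Hom(G, E)` is flat and `Hom(-, E)` turns flat modules into injective
ones (tensor-hom adjunction). For flatness, consider the natural map
`P ⊗ Hom(G, Q) → Hom(Hom(P, G), Q)`. It is bijective for `P = Rⁿ`, so by the four lemma it is
injective for finitely presented `P` when `Q` is injective (`Hom(-, G)` is left exact and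
`Hom(-, Q)` exact). By coherence this applies to a finitely generated ideal `I`, and since `G` is
injective, `I ⊗ Hom(G, Q) → R ⊗ Hom(G, Q)` is then injective.
-/

open TensorProduct LinearMap

section

variable {R : Type u} [CommRing R] {P P' G : Type*} {Q : Type u}
  [AddCommGroup P] [Module R P] [AddCommGroup P'] [Module R P']
  [AddCommGroup G] [Module R G] [AddCommGroup Q] [Module R Q]

variable (R P G Q) in
noncomputable def tensorHomToHomHom : P ⊗[R] (G →ₗ[R] Q) →ₗ[R] ((P →ₗ[R] G) →ₗ[R] Q) :=
  TensorProduct.lift ((llcomp R (P →ₗ[R] G) G Q).flip ∘ₗ applyₗ)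

@[simp]
theorem tensorHomToHomHom_tmul (p : P) (f : G →ₗ[R] Q) (φ : P →ₗ[R] G) :
    tensorHomToHomHom R P G Q (p ⊗ₜ f) φ = f (φ p) :=
  rfl

theorem lcomp_lcomp_comp_tensorHomToHomHom (u : P →ₗ[R] P') :
    lcomp R Q (lcomp R G u) ∘ₗ tensorHomToHomHom R P G Q =
      tensorHomToHomHom R P' G Q ∘ₗ u.rTensor _ :=
  TensorProduct.ext' fun _ _ => rfl

variable (G Q) in
theorem tensorHomToHomHom_bijective_of_pi (ι : Type*) [Fintype ι] [DecidableEq ι] :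
    Function.Bijective (tensorHomToHomHom R (ι → R) G Q) := by
  let ψ : (((ι → R) →ₗ[R] G) →ₗ[R] Q) →ₗ[R] (ι → R) ⊗[R] (G →ₗ[R] Q) :=
    ∑ i, TensorProduct.mk R _ _ (Pi.single i 1) ∘ₗ lcomp R Q (smulRightₗ (proj i))
  have hψ : ψ ∘ₗ tensorHomToHomHom R (ι → R) G Q = .id := by
    refine TensorProduct.ext' fun p f => ?_
    have hcoord (i : ι) :
        lcomp R Q (smulRightₗ (proj i)) (tensorHomToHomHom R (ι → R) G Q (p ⊗ₜ f)) = p i • f := by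
      ext g; simp
    simp only [LinearMap.comp_apply, ψ, LinearMap.sum_apply, mk_apply, hcoord, LinearMap.id_apply]
    calc ∑ i, (Pi.single i 1 : ι → R) ⊗ₜ[R] (p i • f) = ∑ i, Pi.single i (p i) ⊗ₜ[R] f := by
          simp only [tmul_smul, smul_tmul', ← Pi.single_smul', smul_eq_mul, mul_one]
      _ = p ⊗ₜ f := by rw [← sum_tmul, Finset.univ_sum_single]
  have hψ' : tensorHomToHomHom R (ι → R) G Q ∘ₗ ψ = .id := by
    ext Φ φ
    simp only [LinearMap.comp_apply, ψ, mk_apply, LinearMap.id_apply,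
      map_sum, LinearMap.sum_apply, tensorHomToHomHom_tmul, lcomp_apply, smulRightₗ_apply]
    rw [← map_sum]
    congr 1
    refine LinearMap.ext fun v => ?_
    simp only [LinearMap.sum_apply, smulRight_apply, proj_apply, ← map_smul, ← Pi.single_smul',
      smul_eq_mul, mul_one, ← map_sum, Finset.univ_sum_single]
  exact Function.bijective_iff_has_inverse.mpr
    ⟨ψ, DFunLike.congr_fun hψ, DFunLike.congr_fun hψ'⟩

theorem LinearMap.exact_lcomp_of_exact [Module.Injective R Q] {f : P →ₗ[R] P'} {g : P' →ₗ[R] G}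
    (hfg : Function.Exact f g) : Function.Exact (lcomp R Q g) (lcomp R Q f) := by
  intro h
  refine ⟨fun hh => ?_, ?_⟩
  · have hker : LinearMap.ker g ≤ LinearMap.ker h := by
      rw [hfg.linearMap_ker_eq, range_le_ker_iff]
      exact hh
    obtain ⟨k, hk⟩ := Module.Injective.extension_property R Q _ _ ((ker g).liftQ g le_rfl)
      (ker_eq_bot.mp (Submodule.ker_liftQ_eq_bot _ _ _ le_rfl)) ((ker g).liftQ h hker)
    exact ⟨k, by ext x; exact congr($hk (Submodule.Quotient.mk x))⟩
  · rintro ⟨k, rfl⟩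
    simp [lcomp_apply', LinearMap.comp_assoc, hfg.linearMap_comp_eq_zero]

theorem tensorHomToHomHom_injective [Module.Injective R Q] [Module.FinitePresentation R P] :
    Function.Injective (tensorHomToHomHom R P G Q) := by
  obtain ⟨n, m, π, d, hπ, hdπ⟩ := Module.FinitePresentation.exists_fin' R P
  exact LinearMap.injective_of_surjective_of_injective_of_right_exact
    (d.rTensor _) (π.rTensor _) (lcomp R Q (lcomp R G d)) (lcomp R Q (lcomp R G π))
    (tensorHomToHomHom R _ G Q) (tensorHomToHomHom R _ G Q) (tensorHomToHomHom R P G Q)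
    (lcomp_lcomp_comp_tensorHomToHomHom d) (lcomp_lcomp_comp_tensorHomToHomHom π)
    (rTensor_exact _ hdπ hπ) (exact_lcomp_of_exact (exact_lcomp_of_exact_of_surjective G hdπ hπ))
    (tensorHomToHomHom_bijective_of_pi G Q _).2 (tensorHomToHomHom_bijective_of_pi G Q _).1
    (rTensor_surjective _ hπ)

end

section

variable {R : Type u} [CommRing R]

theorem Module.Flat.linearMap_of_isCoherentRing (hcoh : IsCoherentRing R) (G Q : Type u)
    [AddCommGroup G] [Module R G] [Module.Injective R G]
    [AddCommGroup Q] [Module R Q] [Module.Injective R Q] :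
    Module.Flat R (G →ₗ[R] Q) := by
  refine Module.Flat.iff_rTensor_injective.mpr fun I hI => ?_
  have := hcoh I hI
  have hrestrict : Function.Surjective (lcomp R G I.subtype) := fun ψ =>
    Module.Injective.extension_property R G _ _ _ I.injective_subtype ψ
  have hcomp := lcomp_lcomp_comp_tensorHomToHomHom (G := G) (Q := Q) I.subtype
  refine Function.Injective.of_comp (f := tensorHomToHomHom R R G Q) ?_
  rw [← LinearMap.coe_comp, ← hcomp, LinearMap.coe_comp]
  exact (lcomp_injective_of_surjective _ hrestrict).comp tensorHomToHomHom_injective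

theorem Module.Injective.linearMap_of_flat (M : Type*) (Q : Type u) [AddCommGroup M] [Module R M]
    [Module.Flat R M] [AddCommGroup Q] [Module R Q] [Module.Injective R Q] :
    Module.Injective R (M →ₗ[R] Q) where
  out X Y _ _ _ _ f hf g := by
    obtain ⟨k, hk⟩ := Module.Injective.extension_property R Q _ _ (f.rTensor M)
      (Module.Flat.rTensor_preserves_injective_linearMap f hf)
      (TensorProduct.uncurry (.id R) X M Q g)
    exact ⟨TensorProduct.curry k, fun x => LinearMap.ext fun m => congr($hk (x ⊗ₜ m))⟩

theorem exists_linearMap_apply_ne_zero_of_ker_le {M : Type*} {Q : Type u} [AddCommGroup M]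
    [Module R M] [AddCommGroup Q] [Module R Q] [Module.Injective R Q] {I : Ideal R} (hI : I ≠ ⊤)
    (e : (R ⧸ I) →ₗ[R] Q) (he : Function.Injective e) {m : M}
    (hm : ker (toSpanSingleton R M m) ≤ I) : ∃ f : M →ₗ[R] Q, f m ≠ 0 := by
  set q := toSpanSingleton R M m
  obtain ⟨f, hf⟩ := Module.Injective.extension_property R Q _ _ ((ker q).liftQ q le_rfl)
    (ker_eq_bot.mp (Submodule.ker_liftQ_eq_bot _ _ _ le_rfl)) (e ∘ₗ Submodule.factor hm)
  have hfm : f m = e (Submodule.Quotient.mk 1) := by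
    simpa only [LinearMap.comp_apply, Submodule.liftQ_apply, q, toSpanSingleton_apply, one_smul,
      Submodule.factor, Submodule.mapQ_apply, LinearMap.id_apply] using
      congr($hf (Submodule.Quotient.mk 1))
  refine ⟨f, fun h => hI ((Ideal.eq_top_iff_one I).mpr ?_)⟩
  rwa [h, eq_comm, map_eq_zero_iff e he, Submodule.Quotient.mk_eq_zero] at hfm

theorem exists_linearMap_pi_apply_ne_zero {M : Type*} [AddCommGroup M] [Module R M]
    (E : MaximalSpectrum R → Type u) [∀ P, AddCommGroup (E P)] [∀ P, Module R (E P)]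
    [∀ P, Module.Injective R (E P)] (e : ∀ P, (R ⧸ P.asIdeal) →ₗ[R] E P)
    (he : ∀ P, Function.Injective (e P)) {m : M} (hm : m ≠ 0) :
    ∃ f : M →ₗ[R] ∀ P, E P, f m ≠ 0 := by
  classical
  have hker : ker (toSpanSingleton R M m) ≠ ⊤ := fun h =>
    hm (by simpa using (eq_top_iff.mp h (Submodule.mem_top (x := (1 : R)))))
  obtain ⟨P, hP, hle⟩ := Ideal.exists_le_maximal _ hker
  obtain ⟨f, hf⟩ :=
    exists_linearMap_apply_ne_zero_of_ker_le hP.ne_top (e ⟨P, hP⟩) (he ⟨P, hP⟩) hle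
  exact ⟨single R E ⟨P, hP⟩ ∘ₗ f, fun h => hf (by simpa using congr_fun h ⟨P, hP⟩)⟩

theorem applyₗ_injective_of_exists_apply_ne_zero {M Q : Type*} [AddCommGroup M] [Module R M]
    [AddCommGroup Q] [Module R Q] (h : ∀ m : M, m ≠ 0 → ∃ f : M →ₗ[R] Q, f m ≠ 0) :
    Function.Injective (applyₗ : M →ₗ[R] (M →ₗ[R] Q) →ₗ[R] Q) := by
  refine (injective_iff_map_eq_zero _).mpr fun m hm => ?_
  by_contra hm0
  obtain ⟨f, hf⟩ := h m hm0
  exact hf congr($hm f)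

end

theorem coherent_domain_double_dual_injective_general (R : Type u) [CommRing R]
    (hcoh : IsCoherentRing R)
    (G : ModuleCat.{u} R) (hG : Module.Injective R G)
    (E : MaximalSpectrum R → ModuleCat.{u} R)
    (e : ∀ P : MaximalSpectrum R, (R ⧸ P.asIdeal) →ₗ[R] E P)
    (hE : ∀ P : MaximalSpectrum R, IsInjectiveHull R (R ⧸ P.asIdeal) (E P) (e P)) :
    Module.Injective R
      (((G : Type u) →ₗ[R] (∀ P, (E P : Type u))) →ₗ[R] (∀ P, (E P : Type u))) ∧
    ∃ (i : (G : Type u) →ₗ[R]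
          (((G : Type u) →ₗ[R] (∀ P, (E P : Type u))) →ₗ[R] (∀ P, (E P : Type u))))
      (s : (((G : Type u) →ₗ[R] (∀ P, (E P : Type u))) →ₗ[R] (∀ P, (E P : Type u))) →ₗ[R]
          (G : Type u)),
      s.comp i = LinearMap.id := by
  have : ∀ P, Module.Injective R (E P) := fun P => (hE P).1
  have : Module.Flat R ((G : Type u) →ₗ[R] ∀ P, (E P : Type u)) :=
    Module.Flat.linearMap_of_isCoherentRing hcoh _ _
  refine ⟨Module.Injective.linearMap_of_flat _ _, ?_⟩
  have hi := applyₗ_injective_of_exists_apply_ne_zero (R := R) (M := G) (Q := ∀ P, (E P : Type u))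
    fun _ hg => exists_linearMap_pi_apply_ne_zero _ e (fun P => (hE P).2.1) hg
  obtain ⟨s, hs⟩ := Module.Injective.extension_property R G _ _ _ hi LinearMap.id
  exact ⟨_, s, hs⟩

/-- Let `R` be a coherent domain and `G` an injective `R`-module. Let
`E = ∏_{P ∈ Max R} E_R(R/P)` and `F = Hom_R(Hom_R(G, E), E)`. Then `F` is an injective
`R`-module and `G` is a direct summand of `F`. -/
theorem coherent_domain_double_dual_injective (R : Type u) [CommRing R] [IsDomain R]
    (hcoh : IsCoherentRing R)
    (G : ModuleCat.{u} R) (hG : Module.Injective R G)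
    (E : MaximalSpectrum R → ModuleCat.{u} R)
    (e : ∀ P : MaximalSpectrum R, (R ⧸ P.asIdeal) →ₗ[R] E P)
    (hE : ∀ P : MaximalSpectrum R, IsInjectiveHull R (R ⧸ P.asIdeal) (E P) (e P)) :
    Module.Injective R
      (((G : Type u) →ₗ[R] (∀ P, (E P : Type u))) →ₗ[R] (∀ P, (E P : Type u))) ∧
    ∃ (i : (G : Type u) →ₗ[R]
          (((G : Type u) →ₗ[R] (∀ P, (E P : Type u))) →ₗ[R] (∀ P, (E P : Type u))))
      (s : (((G : Type u) →ₗ[R] (∀ P, (E P : Type u))) →ₗ[R] (∀ P, (E P : Type u))) →ₗ[R]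
          (G : Type u)),
      s.comp i = LinearMap.id :=
  coherent_domain_double_dual_injective_general R hcoh G hG E e hE
end
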